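/- arXiv:2304.08003 — 7 statements merged into one kernel-verified Lean document; each statement's English description precedes it below -/
import Mathlib

section
/- Let G be a balanced bipartite graph with parts V1, V2 each of size m+n-1, where m > n ≥ 1, and δ(G) > (3/4)(m+n-1). Then for every red-blue edge-coloring of G, either there is a connected component of the red subgraph containing at least m vertices of V1 and at least m vertices of V2, or there is a connected component of the blue subgraph containing at least n vertices of V1 and at least n vertices of V2. -/
open SimpleGraph Set

private lemma adj_supp' {V : Type*} {H : SimpleGraph V} {c : H.ConnectedComponent} {u v : V}
    (hu : u ∈ c.supp) (h : H.Adj u v) : v ∈ c.supp := by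
  rw [SimpleGraph.ConnectedComponent.mem_supp_iff] at hu ⊢
  rw [← hu]
  exact SimpleGraph.ConnectedComponent.sound h.symm.reachable

private lemma mem_mk_supp' {V : Type*} (H : SimpleGraph V) (v : V) :
    v ∈ (H.connectedComponentMk v).supp := by
  rw [SimpleGraph.ConnectedComponent.mem_supp_iff]

private lemma glue1' {V : Type*} (H : SimpleGraph V) (X Y : Set V) (hNE : Y.Nonempty)
    (hCN : ∀ u ∈ Y, ∀ w ∈ Y, ∃ z, H.Adj u z ∧ H.Adj w z)
    (hatt : ∀ x ∈ X, ∃ y ∈ Y, H.Adj x y) :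
    ∃ c : H.ConnectedComponent, X ⊆ c.supp ∧ Y ⊆ c.supp := by
  obtain ⟨y0, hy0⟩ := hNE
  have hYreach : ∀ y ∈ Y, H.Reachable y y0 := by
    intro y hy
    obtain ⟨z, hz1, hz2⟩ := hCN y hy y0 hy0
    exact hz1.reachable.trans hz2.reachable.symm
  refine ⟨H.connectedComponentMk y0, ?_, ?_⟩
  · intro x hx
    obtain ⟨y, hy, hxy⟩ := hatt x hx
    rw [SimpleGraph.ConnectedComponent.mem_supp_iff]
    exact SimpleGraph.ConnectedComponent.sound (hxy.reachable.trans (hYreach y hy))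
  · intro y hy
    rw [SimpleGraph.ConnectedComponent.mem_supp_iff]
    exact SimpleGraph.ConnectedComponent.sound (hYreach y hy)

/-- number of non-neighbours (within the opposite part `Q`) is less than `N/4`. -/
private lemma miss_aux' {V : Type*} [Fintype V] (G : SimpleGraph V) (Q : Finset V) (N : ℕ)
    (hQN : Q.card = N) (v : V) (hnb : G.neighborSet v ⊆ ↑Q)
    (hdeg : 3 * N < 4 * (G.neighborSet v).ncard) :
    4 * ((↑Q : Set V) \ G.neighborSet v).ncard < N := by
  have h1 : ((↑Q : Set V) \ G.neighborSet v).ncard = N - (G.neighborSet v).ncard := by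
    rw [Set.ncard_diff hnb (Set.toFinite _), Set.ncard_coe_finset, hQN]
  have h2 : (G.neighborSet v).ncard ≤ N := by
    calc (G.neighborSet v).ncard ≤ (↑Q : Set V).ncard :=
          Set.ncard_le_ncard hnb (Set.toFinite _)
    _ = N := by rw [Set.ncard_coe_finset, hQN]
  omega

/-- common neighbour inside a set `S` of size at least `N/2`. -/
private lemma cn_aux' {V : Type*} [Fintype V] (G : SimpleGraph V) (Q : Finset V) (N : ℕ)
    (hQN : Q.card = N) (u w : V)
    (hnbu : G.neighborSet u ⊆ ↑Q) (hnbw : G.neighborSet w ⊆ ↑Q)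
    (hdu : 3 * N < 4 * (G.neighborSet u).ncard)
    (hdw : 3 * N < 4 * (G.neighborSet w).ncard)
    (S : Set V) (hS : S ⊆ ↑Q) (h2 : N ≤ 2 * S.ncard) :
    ∃ z ∈ S, G.Adj u z ∧ G.Adj w z := by
  classical
  by_contra hcon
  push_neg at hcon
  have hsub : S ⊆ ((↑Q : Set V) \ G.neighborSet u) ∪ ((↑Q : Set V) \ G.neighborSet w) := by
    intro z hz
    by_cases h : G.Adj u z
    · exact Or.inr ⟨hS hz, hcon z hz h⟩
    · exact Or.inl ⟨hS hz, h⟩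
  have hle : S.ncard ≤ ((↑Q : Set V) \ G.neighborSet u).ncard
      + ((↑Q : Set V) \ G.neighborSet w).ncard :=
    le_trans (Set.ncard_le_ncard hsub (Set.toFinite _)) (Set.ncard_union_le _ _)
  have m1 := miss_aux' G Q N hQN u hnbu hdu
  have m2 := miss_aux' G Q N hQN w hnbw hdw
  omega

/-- a neighbour inside a set `S` of size more than `N/4`. -/
private lemma sn_aux' {V : Type*} [Fintype V] (G : SimpleGraph V) (Q : Finset V) (N : ℕ)
    (hQN : Q.card = N) (v : V)
    (hnb : G.neighborSet v ⊆ ↑Q)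
    (hd : 3 * N < 4 * (G.neighborSet v).ncard)
    (S : Set V) (hS : S ⊆ ↑Q) (h4 : N + 3 ≤ 4 * S.ncard) :
    ∃ z ∈ S, G.Adj v z := by
  by_contra hcon
  push_neg at hcon
  have hsub : S ⊆ ((↑Q : Set V) \ G.neighborSet v) := fun z hz => ⟨hS hz, hcon z hz⟩
  have hle : S.ncard ≤ ((↑Q : Set V) \ G.neighborSet v).ncard :=
    Set.ncard_le_ncard hsub (Set.toFinite _)
  have m1 := miss_aux' G Q N hQN v hnb hd
  omega

/-- If a red component occupies at least half of each side, it occupies at least `m`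
vertices of side `Q`. -/
private lemma halfLemma' {V : Type*} [Fintype V] [DecidableEq V]
    (G R B : SimpleGraph V) (P Q : Finset V) (N m n : ℕ)
    (hPN : P.card = N) (hQN : Q.card = N)
    (hcrossP : ∀ x y, G.Adj x y → x ∈ P → y ∈ Q)
    (hcrossQ : ∀ x y, G.Adj x y → x ∈ Q → y ∈ P)
    (hdeg : ∀ v, 3 * N < 4 * (G.neighborSet v).ncard)
    (hsplit : ∀ x y, G.Adj x y → R.Adj x y ∨ B.Adj x y)
    (hBnorm : ∀ d : B.ConnectedComponent,
      ((↑P : Set V) ∩ d.supp).ncard < n ∨ ((↑Q : Set V) ∩ d.supp).ncard < n)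
    (hn : 1 ≤ n) (h2n : 2 * n ≤ N) (hmn : N + 1 = m + n)
    (c : R.ConnectedComponent)
    (h1 : N ≤ 2 * ((↑P : Set V) ∩ c.supp).ncard)
    (h2 : N ≤ 2 * ((↑Q : Set V) ∩ c.supp).ncard) :
    m ≤ ((↑Q : Set V) ∩ c.supp).ncard := by
  classical
  have hnbP : ∀ v ∈ P, G.neighborSet v ⊆ ↑Q := fun v hv y hy => hcrossP v y hy hv
  have hnbQ : ∀ v ∈ Q, G.neighborSet v ⊆ ↑P := fun v hv y hy => hcrossQ v y hy hv
  by_cases hall : (↑Q : Set V) ⊆ c.supp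
  · have : (↑Q : Set V) ∩ c.supp = (↑Q : Set V) := Set.inter_eq_left.mpr hall
    rw [this, Set.ncard_coe_finset, hQN]
    omega
  · obtain ⟨y0, hy0Q, hy0n⟩ := Set.not_subset.mp hall
    set S : Set V := (↑P : Set V) ∩ c.supp with hSdef
    set U : Set V := (↑Q : Set V) \ c.supp with hUdef
    have hy0U : y0 ∈ U := ⟨hy0Q, hy0n⟩
    have hUQ : U ⊆ (↑Q : Set V) := Set.diff_subset
    -- all edges between S and U are blue
    have hedge : ∀ u ∈ U, ∀ x ∈ S, G.Adj x u → B.Adj x u := by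
      intro u hu x hx hadj
      rcases hsplit x u hadj with hR | hB'
      · exact absurd (adj_supp' hx.2 hR) hu.2
      · exact hB'
    -- U is contained within a single blue component
    have hCN : ∀ u ∈ U, ∀ w ∈ U, ∃ z, B.Adj u z ∧ B.Adj w z := by
      intro u hu w hw
      obtain ⟨z, hzS, hz1, hz2⟩ := cn_aux' G P N hPN u w (hnbQ u (hUQ hu)) (hnbQ w (hUQ hw))
        (hdeg u) (hdeg w) S Set.inter_subset_left h1
      exact ⟨z, (hedge u hu z hzS hz1.symm).symm, (hedge w hw z hzS hz2.symm).symm⟩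
    obtain ⟨d, -, hUd⟩ := glue1' B ∅ U ⟨y0, hy0U⟩ hCN
      (fun x hx => absurd hx (Set.notMem_empty x))
    -- cardinality bookkeeping
    have hUeq : U = (↑Q : Set V) \ ((↑Q : Set V) ∩ c.supp) := by
      ext z; simp only [hUdef, Set.mem_diff, Set.mem_inter_iff]; tauto
    have hUcard : U.ncard = N - ((↑Q : Set V) ∩ c.supp).ncard := by
      rw [hUeq, Set.ncard_diff Set.inter_subset_left (Set.toFinite _),
        Set.ncard_coe_finset, hQN]
    have hqle : ((↑Q : Set V) ∩ c.supp).ncard ≤ N := by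
      calc ((↑Q : Set V) ∩ c.supp).ncard ≤ (↑Q : Set V).ncard :=
            Set.ncard_le_ncard Set.inter_subset_left (Set.toFinite _)
      _ = N := by rw [Set.ncard_coe_finset, hQN]
    rcases hBnorm d with hpd | hqd
    · -- the P-trace of d is small
      -- (I) : S is almost inside d
      have hI : S ⊆ ((↑P : Set V) ∩ d.supp) ∪ ((↑P : Set V) \ G.neighborSet y0) := by
        intro x hx
        by_cases hadj : G.Adj y0 x
        · exact Or.inl ⟨hx.1, adj_supp' (hUd hy0U) (hedge y0 hy0U x hx hadj.symm).symm⟩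
        · exact Or.inr ⟨hx.1, hadj⟩
      have hIc : S.ncard ≤ ((↑P : Set V) ∩ d.supp).ncard
          + ((↑P : Set V) \ G.neighborSet y0).ncard :=
        le_trans (Set.ncard_le_ncard hI (Set.toFinite _)) (Set.ncard_union_le _ _)
      have hm1 := miss_aux' G P N hPN y0 (hnbQ y0 hy0Q) (hdeg y0)
      -- (II) : a vertex of S outside d
      have hxex : ∃ x, x ∈ S ∧ x ∉ d.supp := by
        by_contra hno
        push_neg at hno
        have hsub2 : S ⊆ (↑P : Set V) ∩ d.supp := fun x hx => ⟨hx.1, hno x hx⟩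
        have := Set.ncard_le_ncard hsub2 (Set.toFinite _)
        omega
      obtain ⟨xs, hxsS, hxsd⟩ := hxex
      have hUmiss : U ⊆ (↑Q : Set V) \ G.neighborSet xs := by
        intro u hu
        refine ⟨hu.1, fun hadj => ?_⟩
        rcases hsplit xs u hadj with hR | hB'
        · exact hu.2 (adj_supp' hxsS.2 hR)
        · exact hxsd (adj_supp' (hUd hu) hB'.symm)
      have hIIc : U.ncard ≤ ((↑Q : Set V) \ G.neighborSet xs).ncard :=
        Set.ncard_le_ncard hUmiss (Set.toFinite _)
      have hm2 := miss_aux' G Q N hQN xs (hnbP xs hxsS.1) (hdeg xs)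
      omega
    · -- the Q-trace of d is small : then U is small
      have hUsub : U ⊆ (↑Q : Set V) ∩ d.supp := fun u hu => ⟨hu.1, hUd hu⟩
      have := Set.ncard_le_ncard hUsub (Set.toFinite _)
      omega

/-- no red component occupies at least half of side `P`. -/
private lemma heavyRed' {V : Type*} [Fintype V] [DecidableEq V]
    (G R B : SimpleGraph V) (P Q : Finset V) (N n : ℕ)
    (hPN : P.card = N) (hQN : Q.card = N)
    (hcrossP : ∀ x y, G.Adj x y → x ∈ P → y ∈ Q)
    (hcrossQ : ∀ x y, G.Adj x y → x ∈ Q → y ∈ P)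
    (hdeg : ∀ v, 3 * N < 4 * (G.neighborSet v).ncard)
    (hsplit : ∀ x y, G.Adj x y → R.Adj x y ∨ B.Adj x y)
    (hBnorm : ∀ d : B.ConnectedComponent,
      ((↑P : Set V) ∩ d.supp).ncard < n ∨ ((↑Q : Set V) ∩ d.supp).ncard < n)
    (hn : 1 ≤ n) (h2n : 2 * n ≤ N)
    (hhalf : ∀ c : R.ConnectedComponent,
      N ≤ 2 * ((↑P : Set V) ∩ c.supp).ncard →
      N ≤ 2 * ((↑Q : Set V) ∩ c.supp).ncard → False)
    (c : R.ConnectedComponent)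
    (h1 : N ≤ 2 * ((↑P : Set V) ∩ c.supp).ncard) : False := by
  classical
  have hnbP : ∀ v ∈ P, G.neighborSet v ⊆ ↑Q := fun v hv y hy => hcrossP v y hy hv
  have hnbQ : ∀ v ∈ Q, G.neighborSet v ⊆ ↑P := fun v hv y hy => hcrossQ v y hy hv
  have h2 : 2 * ((↑Q : Set V) ∩ c.supp).ncard < N := by
    by_contra hh
    push_neg at hh
    exact hhalf c h1 hh
  set S : Set V := (↑P : Set V) ∩ c.supp with hSdef
  set U : Set V := (↑Q : Set V) \ c.supp with hUdef
  have hUQ : U ⊆ (↑Q : Set V) := Set.diff_subset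
  have hUeq : U = (↑Q : Set V) \ ((↑Q : Set V) ∩ c.supp) := by
    ext z; simp only [hUdef, Set.mem_diff, Set.mem_inter_iff]; tauto
  have hqle : ((↑Q : Set V) ∩ c.supp).ncard ≤ N := by
    calc ((↑Q : Set V) ∩ c.supp).ncard ≤ (↑Q : Set V).ncard :=
          Set.ncard_le_ncard Set.inter_subset_left (Set.toFinite _)
    _ = N := by rw [Set.ncard_coe_finset, hQN]
  have hUcard : U.ncard = N - ((↑Q : Set V) ∩ c.supp).ncard := by
    rw [hUeq, Set.ncard_diff Set.inter_subset_left (Set.toFinite _),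
      Set.ncard_coe_finset, hQN]
  have hU2 : N + 1 ≤ 2 * U.ncard := by omega
  have hUne : U.Nonempty := Set.nonempty_of_ncard_ne_zero (by omega)
  have hedge : ∀ u ∈ U, ∀ x ∈ S, G.Adj x u → B.Adj x u := by
    intro u hu x hx hadj
    rcases hsplit x u hadj with hR | hB'
    · exact absurd (adj_supp' hx.2 hR) hu.2
    · exact hB'
  have hCN : ∀ u ∈ U, ∀ w ∈ U, ∃ z, B.Adj u z ∧ B.Adj w z := by
    intro u hu w hw
    obtain ⟨z, hzS, hz1, hz2⟩ := cn_aux' G P N hPN u w (hnbQ u (hUQ hu)) (hnbQ w (hUQ hw))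
      (hdeg u) (hdeg w) S Set.inter_subset_left h1
    exact ⟨z, (hedge u hu z hzS hz1.symm).symm, (hedge w hw z hzS hz2.symm).symm⟩
  have hatt : ∀ x ∈ S, ∃ y ∈ U, B.Adj x y := by
    intro x hx
    obtain ⟨y, hyU, hadj⟩ := sn_aux' G Q N hQN x (hnbP x hx.1) (hdeg x) U hUQ (by omega)
    exact ⟨y, hyU, hedge y hyU x hx hadj⟩
  obtain ⟨d, hSd, hUd⟩ := glue1' B S U hUne hCN hatt
  have hSP : S ⊆ (↑P : Set V) ∩ d.supp := fun x hx => ⟨hx.1, hSd hx⟩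
  have hUQ' : U ⊆ (↑Q : Set V) ∩ d.supp := fun u hu => ⟨hu.1, hUd hu⟩
  have hs1 := Set.ncard_le_ncard hSP (Set.toFinite _)
  have hs2 := Set.ncard_le_ncard hUQ' (Set.toFinite _)
  rcases hBnorm d with h | h <;> omega

/-- no blue component occupies at least half of side `P`. -/
private lemma heavyBlue' {V : Type*} [Fintype V] [DecidableEq V]
    (G R B : SimpleGraph V) (P Q : Finset V) (N n : ℕ)
    (hPN : P.card = N) (hQN : Q.card = N)
    (hcrossP : ∀ x y, G.Adj x y → x ∈ P → y ∈ Q)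
    (hcrossQ : ∀ x y, G.Adj x y → x ∈ Q → y ∈ P)
    (hdeg : ∀ v, 3 * N < 4 * (G.neighborSet v).ncard)
    (hsplit : ∀ x y, G.Adj x y → R.Adj x y ∨ B.Adj x y)
    (hBnorm : ∀ d : B.ConnectedComponent,
      ((↑P : Set V) ∩ d.supp).ncard < n ∨ ((↑Q : Set V) ∩ d.supp).ncard < n)
    (hn : 1 ≤ n) (h2n : 2 * n ≤ N)
    (hheavyR : ∀ c : R.ConnectedComponent,
      N ≤ 2 * ((↑P : Set V) ∩ c.supp).ncard → False)
    (d : B.ConnectedComponent)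
    (h1 : N ≤ 2 * ((↑P : Set V) ∩ d.supp).ncard) : False := by
  classical
  have hnbP : ∀ v ∈ P, G.neighborSet v ⊆ ↑Q := fun v hv y hy => hcrossP v y hy hv
  have hnbQ : ∀ v ∈ Q, G.neighborSet v ⊆ ↑P := fun v hv y hy => hcrossQ v y hy hv
  set S : Set V := (↑P : Set V) ∩ d.supp with hSdef
  set Y : Set V := (↑Q : Set V) \ d.supp with hYdef
  have hYQ : Y ⊆ (↑Q : Set V) := Set.diff_subset
  have hqle : ((↑Q : Set V) ∩ d.supp).ncard ≤ N := by
    calc ((↑Q : Set V) ∩ d.supp).ncard ≤ (↑Q : Set V).ncard :=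
          Set.ncard_le_ncard Set.inter_subset_left (Set.toFinite _)
    _ = N := by rw [Set.ncard_coe_finset, hQN]
  have hYeq : Y = (↑Q : Set V) \ ((↑Q : Set V) ∩ d.supp) := by
    ext z; simp only [hYdef, Set.mem_diff, Set.mem_inter_iff]; tauto
  have hYcard : Y.ncard = N - ((↑Q : Set V) ∩ d.supp).ncard := by
    rw [hYeq, Set.ncard_diff Set.inter_subset_left (Set.toFinite _),
      Set.ncard_coe_finset, hQN]
  have hSncard : S.ncard = ((↑P : Set V) ∩ d.supp).ncard := by rw [hSdef]
  by_cases hc : 3 * N ≤ 4 * ((↑Q : Set V) ∩ d.supp).ncard + 2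
  · rcases hBnorm d with h | h <;> omega
  · push_neg at hc
    have hY4 : N + 3 ≤ 4 * Y.ncard := by omega
    have hYne : Y.Nonempty := Set.nonempty_of_ncard_ne_zero (by omega)
    -- all edges between S and Y are red
    have hedge : ∀ u ∈ Y, ∀ x ∈ S, G.Adj x u → R.Adj x u := by
      intro u hu x hx hadj
      rcases hsplit x u hadj with hR | hB'
      · exact hR
      · exact absurd (adj_supp' hx.2 hB') hu.2
    have hCN : ∀ u ∈ Y, ∀ w ∈ Y, ∃ z, R.Adj u z ∧ R.Adj w z := by
      intro u hu w hw
      obtain ⟨z, hzS, hz1, hz2⟩ := cn_aux' G P N hPN u w (hnbQ u (hYQ hu)) (hnbQ w (hYQ hw))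
        (hdeg u) (hdeg w) S Set.inter_subset_left h1
      exact ⟨z, (hedge u hu z hzS hz1.symm).symm, (hedge w hw z hzS hz2.symm).symm⟩
    have hatt : ∀ x ∈ S, ∃ y ∈ Y, R.Adj x y := by
      intro x hx
      obtain ⟨y, hyY, hadj⟩ := sn_aux' G Q N hQN x (hnbP x hx.1) (hdeg x) Y hYQ hY4
      exact ⟨y, hyY, hedge y hyY x hx hadj⟩
    obtain ⟨cr, hScr, hYcr⟩ := glue1' R S Y hYne hCN hatt
    apply hheavyR cr
    have hsub : S ⊆ (↑P : Set V) ∩ cr.supp := fun x hx => ⟨hx.1, hScr hx⟩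
    have := Set.ncard_le_ncard hsub (Set.toFinite _)
    omega

theorem stmt_1 {V : Type*} [Fintype V] [DecidableEq V] (m n : ℕ) (hn : 1 ≤ n) (hmn : n < m)
    (G : SimpleGraph V) (V1 V2 : Finset V)
    (hdisj : Disjoint V1 V2) (hcover : V1 ∪ V2 = Finset.univ)
    (hV1 : V1.card = m + n - 1) (hV2 : V2.card = m + n - 1)
    (hbip : ∀ x y, G.Adj x y → (x ∈ V1 ∧ y ∈ V2) ∨ (x ∈ V2 ∧ y ∈ V1))
    (hδ : ∀ v, 3 * (m + n - 1) < 4 * (G.neighborSet v).ncard)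
    (R B : SimpleGraph V) (hcolor : R ⊔ B = G) (hcdisj : Disjoint R B) :
    (∃ c : R.ConnectedComponent,
        m ≤ ((V1 : Set V) ∩ c.supp).ncard ∧ m ≤ ((V2 : Set V) ∩ c.supp).ncard) ∨
    (∃ c : B.ConnectedComponent,
        n ≤ ((V1 : Set V) ∩ c.supp).ncard ∧ n ≤ ((V2 : Set V) ∩ c.supp).ncard) := by
  classical
  by_contra hcon
  push_neg at hcon
  obtain ⟨hA0, hB0⟩ := hcon
  set N := m + n - 1 with hNdef
  have h2n : 2 * n ≤ N := by omega
  have hmn1 : N + 1 = m + n := by omega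
  have hNpos : 1 ≤ N := by omega
  -- normalized negations
  have hA : ∀ c : R.ConnectedComponent,
      ((V1 : Set V) ∩ c.supp).ncard < m ∨ ((V2 : Set V) ∩ c.supp).ncard < m := by
    intro c
    by_cases h : m ≤ ((V1 : Set V) ∩ c.supp).ncard
    · exact Or.inr (by have := hA0 c h; omega)
    · exact Or.inl (by omega)
  have hB : ∀ d : B.ConnectedComponent,
      ((V1 : Set V) ∩ d.supp).ncard < n ∨ ((V2 : Set V) ∩ d.supp).ncard < n := by
    intro d
    by_cases h : n ≤ ((V1 : Set V) ∩ d.supp).ncard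
    · exact Or.inr (by have := hB0 d h; omega)
    · exact Or.inl (by omega)
  have hBsym : ∀ d : B.ConnectedComponent,
      ((V2 : Set V) ∩ d.supp).ncard < n ∨ ((V1 : Set V) ∩ d.supp).ncard < n :=
    fun d => (hB d).symm
  -- edge colours
  have hsplit : ∀ x y, G.Adj x y → R.Adj x y ∨ B.Adj x y := by
    intro x y h
    rw [← hcolor] at h
    exact h
  -- bipartite crossing
  have hcross1 : ∀ x y, G.Adj x y → x ∈ V1 → y ∈ V2 := by
    intro x y h hx
    rcases hbip x y h with ⟨_, hy⟩ | ⟨hx2, _⟩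
    · exact hy
    · exact absurd hx2 (Finset.disjoint_left.mp hdisj hx)
  have hcross2 : ∀ x y, G.Adj x y → x ∈ V2 → y ∈ V1 := by
    intro x y h hx
    rcases hbip x y h with ⟨hx1, _⟩ | ⟨_, hy⟩
    · exact absurd hx (Finset.disjoint_left.mp hdisj hx1)
    · exact hy
  have hnb1 : ∀ v ∈ V1, G.neighborSet v ⊆ ↑V2 := fun v hv y hy => hcross1 v y hy hv
  have hnb2 : ∀ v ∈ V2, G.neighborSet v ⊆ ↑V1 := fun v hv y hy => hcross2 v y hy hv
  -- the key structural facts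
  have hhalf : ∀ c : R.ConnectedComponent,
      N ≤ 2 * ((V1 : Set V) ∩ c.supp).ncard →
      N ≤ 2 * ((V2 : Set V) ∩ c.supp).ncard → False := by
    intro c h1 h2
    have hq := halfLemma' G R B V1 V2 N m n hV1 hV2 hcross1 hcross2 hδ hsplit hB hn h2n hmn1
      c h1 h2
    have hp := halfLemma' G R B V2 V1 N m n hV2 hV1 hcross2 hcross1 hδ hsplit hBsym hn h2n hmn1
      c h2 h1
    rcases hA c with h | h <;> omega
  have hstep1 : ∀ c : R.ConnectedComponent,
      N ≤ 2 * ((V1 : Set V) ∩ c.supp).ncard → False := by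
    intro c h1
    exact heavyRed' G R B V1 V2 N n hV1 hV2 hcross1 hcross2 hδ hsplit hB hn h2n hhalf c h1
  have hstep1' : ∀ c : R.ConnectedComponent,
      N ≤ 2 * ((V2 : Set V) ∩ c.supp).ncard → False := by
    intro c h2
    exact heavyRed' G R B V2 V1 N n hV2 hV1 hcross2 hcross1 hδ hsplit hBsym hn h2n
      (fun c' ha hb => hhalf c' hb ha) c h2
  have hstep2 : ∀ d : B.ConnectedComponent,
      N ≤ 2 * ((V1 : Set V) ∩ d.supp).ncard → False := by
    intro d h1
    exact heavyBlue' G R B V1 V2 N n hV1 hV2 hcross1 hcross2 hδ hsplit hB hn h2n hstep1 d h1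
  have hstep2' : ∀ d : B.ConnectedComponent,
      N ≤ 2 * ((V2 : Set V) ∩ d.supp).ncard → False := by
    intro d h2
    exact heavyBlue' G R B V2 V1 N n hV2 hV1 hcross2 hcross1 hδ hsplit hBsym hn h2n hstep1' d h2
  -- final contradiction
  have hV1ne : V1.Nonempty := by
    rw [← Finset.card_pos, hV1]; omega
  obtain ⟨x0, hx0⟩ := hV1ne
  set c := R.connectedComponentMk x0 with hcdef
  have hx0c : x0 ∈ c.supp := mem_mk_supp' R x0
  -- the red component of x0 has a big trace on V2
  have hcov1 : G.neighborSet x0 ⊆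
      ((V2 : Set V) ∩ c.supp) ∪ ((V2 : Set V) ∩ (B.connectedComponentMk x0).supp) := by
    intro y hy
    have hyadj : G.Adj x0 y := hy
    have hyV2 : y ∈ V2 := hcross1 x0 y hyadj hx0
    rcases hsplit x0 y hyadj with hR | hB'
    · exact Or.inl ⟨hyV2, adj_supp' hx0c hR⟩
    · exact Or.inr ⟨hyV2, adj_supp' (mem_mk_supp' B x0) hB'⟩
  have hble0 : 2 * ((V2 : Set V) ∩ (B.connectedComponentMk x0).supp).ncard < N := by
    by_contra hh
    push_neg at hh
    exact hstep2' (B.connectedComponentMk x0) hh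
  have hcov1c : (G.neighborSet x0).ncard ≤ ((V2 : Set V) ∩ c.supp).ncard
      + ((V2 : Set V) ∩ (B.connectedComponentMk x0).supp).ncard :=
    le_trans (Set.ncard_le_ncard hcov1 (Set.toFinite _)) (Set.ncard_union_le _ _)
  have hd0 := hδ x0
  have hc2 : N + 3 ≤ 4 * ((V2 : Set V) ∩ c.supp).ncard := by omega
  have hc2ne : ((V2 : Set V) ∩ c.supp).Nonempty :=
    Set.nonempty_of_ncard_ne_zero (by omega)
  obtain ⟨y0, hy0V2, hy0c⟩ := hc2ne
  -- the red component of x0 also has a big trace on V1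
  have hcov2 : G.neighborSet y0 ⊆
      ((V1 : Set V) ∩ c.supp) ∪ ((V1 : Set V) ∩ (B.connectedComponentMk y0).supp) := by
    intro x hx
    have hxadj : G.Adj y0 x := hx
    have hxV1 : x ∈ V1 := hcross2 y0 x hxadj hy0V2
    rcases hsplit y0 x hxadj with hR | hB'
    · exact Or.inl ⟨hxV1, adj_supp' hy0c hR⟩
    · exact Or.inr ⟨hxV1, adj_supp' (mem_mk_supp' B y0) hB'⟩
  have hble1 : 2 * ((V1 : Set V) ∩ (B.connectedComponentMk y0).supp).ncard < N := by
    by_contra hh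
    push_neg at hh
    exact hstep2 (B.connectedComponentMk y0) hh
  have hcov2c : (G.neighborSet y0).ncard ≤ ((V1 : Set V) ∩ c.supp).ncard
      + ((V1 : Set V) ∩ (B.connectedComponentMk y0).supp).ncard :=
    le_trans (Set.ncard_le_ncard hcov2 (Set.toFinite _)) (Set.ncard_union_le _ _)
  have hd1 := hδ y0
  have hc1 : N + 3 ≤ 4 * ((V1 : Set V) ∩ c.supp).ncard := by omega
  -- Y := V2 \ c.supp has more than half of V2
  have hsc2 : 2 * ((V2 : Set V) ∩ c.supp).ncard < N := by
    by_contra hh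
    push_neg at hh
    exact hstep1' c hh
  set X : Set V := (V1 : Set V) ∩ c.supp with hXdef
  set Y : Set V := (V2 : Set V) \ c.supp with hYdef
  have hYV2 : Y ⊆ (V2 : Set V) := Set.diff_subset
  have hXV1 : X ⊆ (V1 : Set V) := Set.inter_subset_left
  have hYeq : Y = (V2 : Set V) \ ((V2 : Set V) ∩ c.supp) := by
    ext z; simp only [hYdef, Set.mem_diff, Set.mem_inter_iff]; tauto
  have hq2le : ((V2 : Set V) ∩ c.supp).ncard ≤ N := by
    calc ((V2 : Set V) ∩ c.supp).ncard ≤ (V2 : Set V).ncard :=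
          Set.ncard_le_ncard Set.inter_subset_left (Set.toFinite _)
    _ = N := by rw [Set.ncard_coe_finset, hV2]
  have hYcard : Y.ncard = N - ((V2 : Set V) ∩ c.supp).ncard := by
    rw [hYeq, Set.ncard_diff Set.inter_subset_left (Set.toFinite _),
      Set.ncard_coe_finset, hV2]
  have hY2 : N + 1 ≤ 2 * Y.ncard := by omega
  -- all edges between X and Y are blue
  have hedgeF : ∀ x ∈ X, ∀ u ∈ Y, G.Adj x u → B.Adj x u := by
    intro x hx u hu hadj
    rcases hsplit x u hadj with hR | hB'
    · exact absurd (adj_supp' hx.2 hR) hu.2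
    · exact hB'
  have hCNF : ∀ u ∈ X, ∀ w ∈ X, ∃ z, B.Adj u z ∧ B.Adj w z := by
    intro u hu w hw
    obtain ⟨z, hzY, hz1, hz2⟩ := cn_aux' G V2 N hV2 u w (hnb1 u (hXV1 hu)) (hnb1 w (hXV1 hw))
      (hδ u) (hδ w) Y hYV2 (by omega)
    exact ⟨z, hedgeF u hu z hzY hz1, hedgeF w hw z hzY hz2⟩
  have hattF : ∀ v ∈ Y, ∃ x ∈ X, B.Adj v x := by
    intro v hv
    obtain ⟨x, hxX, hadj⟩ := sn_aux' G V1 N hV1 v (hnb2 v (hYV2 hv)) (hδ v) X hXV1 hc1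
    exact ⟨x, hxX, (hedgeF x hxX v hv hadj.symm).symm⟩
  obtain ⟨dF, hYdF, hXdF⟩ := glue1' B Y X ⟨x0, hx0, hx0c⟩ hCNF hattF
  have hYsub : Y ⊆ (V2 : Set V) ∩ dF.supp := fun u hu => ⟨hu.1, hYdF hu⟩
  have hfinal := Set.ncard_le_ncard hYsub (Set.toFinite _)
  exact hstep2' dF (by omega)
end

section
/- Let G be a balanced bipartite graph with parts V1, V2 each of size m+n-1 (m > n ≥ 1) and δ(G) > (3/4)(m+n-1). Suppose a red-blue edge-coloring of G has no red connected matching of size m. Then the blue subgraph has a connected component containing at least n vertices of V1 and at least n vertices of V2. -/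
open SimpleGraph Set

/-- A connected `k`-matching in a graph `H`: a matching of `k` edges all of whose
vertices lie in a single connected component of `H`. -/
def ConnMatching {V : Type*} [Fintype V] (H : SimpleGraph V) (k : ℕ) : Prop :=
  ∃ M : H.Subgraph, M.IsMatching ∧ M.edgeSet.ncard = k ∧
    ∃ c : H.ConnectedComponent, ∀ v ∈ M.verts, H.connectedComponentMk v = c

/-!
Put `N = m + n - 1` and `t = n - 1`, and suppose that every blue component meets one of the two
sides in at most `t` vertices. Every vertex has more than `3N/4` neighbours, each lying in its red
or in its blue component, so the blue components control the red ones: two vertices of a side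
whose blue components together meet the other side in at most `N/2` vertices have a common
neighbour outside these blue components, that is, a common red neighbour. Distinguishing whether
some blue component meets more than half of both sides, of one side, or of neither (where two red
components would force two blue components splitting both sides into halves, which is excluded
because `2t < N`), one finds a red component with at least `m` vertices of red degree `> N/4` on
each side and at least `m` vertices of red degree `> m - N/4` on the two sides together. These
degree bounds give Hall's condition with deficiency, hence `m` disjoint red edges in that
component.
-/

open Finset

theorem Finset.exists_injective_mem_map_inl_union_map_inr {α β : Type*} [DecidableEq β]
    {X : Finset α} {r : α → Finset β} {k : ℕ} (h : ∀ s ⊆ X, #s ≤ #(s.biUnion r) + k) :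
    ∃ F : X → β ⊕ Fin k, Function.Injective F ∧ ∀ x : X, F x ∈ (r x).map .inl ∪ univ.map .inr := by
  classical
  refine (all_card_le_biUnion_card_iff_exists_injective _).1 fun s => ?_
  rcases s.eq_empty_or_nonempty with rfl | ⟨x₀, hx₀⟩
  · simp
  set s' := s.map (Function.Embedding.subtype _)
  have hsX : s' ⊆ X := fun x hx => by
    obtain ⟨y, -, rfl⟩ := mem_map.1 hx
    exact y.2
  have hbi : s.biUnion (fun x => (r x).map .inl ∪ univ.map .inr) =
      (s'.biUnion r).map .inl ∪ univ.map (.inr : Fin k ↪ β ⊕ Fin k) := by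
    ext (b | i) <;> simp [s', mem_biUnion]
    exact ⟨x₀, x₀.2, hx₀⟩
  have := h _ hsX
  rw [card_map] at this
  rw [hbi, card_union_of_disjoint (disjoint_map_inl_map_inr _ _), card_map, card_map, card_univ,
    Fintype.card_fin]
  exact this

theorem Finset.exists_injOn_of_le_card_biUnion_add_card_sdiff {α β : Type*} [DecidableEq α]
    [DecidableEq β] [Nonempty β] {X : Finset α} {r : α → Finset β} {m : ℕ}
    (h : ∀ s ⊆ X, m ≤ #(s.biUnion r) + #(X \ s)) :
    ∃ S ⊆ X, #S = m ∧ ∃ f : α → β, Set.InjOn f S ∧ ∀ x ∈ S, f x ∈ r x := by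
  have hmX : m ≤ #X := by simpa using h ∅ (empty_subset X)
  -- Hall's theorem after adjoining `#X - m` new elements adjacent to everything
  obtain ⟨F, hF, hFr⟩ := exists_injective_mem_map_inl_union_map_inr (r := r) (k := #X - m)
    fun s hs => by
    have := h s hs
    rw [card_sdiff_of_subset hs] at this
    have := card_le_card hs
    omega
  set L := ({x | (F x).isLeft} : Finset X).map (Function.Embedding.subtype _)
  have hL : m ≤ #L := by
    have : #({x | ¬ (F x).isLeft} : Finset X) ≤ #X - m := by
      simpa using card_le_card_of_injOn F (t := univ.map .inr)
        (fun x hx => by cases h : F x <;> simp_all) hF.injOn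
    have := card_filter_add_card_filter_not (s := (univ : Finset X)) fun x => (F x).isLeft
    rw [card_univ, Fintype.card_coe] at this
    rw [card_map]
    omega
  obtain ⟨S, hSL, hS⟩ := exists_subset_card_eq hL
  let f : α → β := fun a =>
    if h : a ∈ X then (F ⟨a, h⟩).elim id fun _ => Classical.arbitrary β else Classical.arbitrary β
  have hfF : ∀ x ∈ L, ∃ hx : x ∈ X, F ⟨x, hx⟩ = .inl (f x) := fun x hx => by
    obtain ⟨hxX, hleft⟩ : ∃ hx : x ∈ X, (F ⟨x, hx⟩).isLeft := by simpa [L] using hx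
    refine ⟨hxX, ?_⟩
    cases h : F ⟨x, hxX⟩ <;> simp_all [f]
  refine ⟨S, fun x hx => (hfF x (hSL hx)).1, hS, f, fun x hx y hy hxy => ?_, fun x hx => ?_⟩
  · obtain ⟨hxX, hx⟩ := hfF x (hSL hx)
    obtain ⟨hyX, hy⟩ := hfF y (hSL hy)
    exact congrArg Subtype.val (hF (hx.trans (hxy ▸ hy.symm)))
  · obtain ⟨hxX, hx⟩ := hfF x (hSL hx)
    simpa [hx] using hFr ⟨x, hxX⟩

theorem Finset.card_filter_le_card_sdiff {α : Type*} [DecidableEq α] {X s : Finset α}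
    {p : α → Prop} [DecidablePred p] (hp : ∀ x ∈ s, ¬ p x) : #{x ∈ X | p x} ≤ #(X \ s) :=
  card_le_card fun x hx =>
    mem_sdiff.2 ⟨(mem_filter.1 hx).1, fun hxs => hp x hxs (mem_filter.1 hx).2⟩

namespace SimpleGraph

variable {V : Type*} [Fintype V] [DecidableEq V] {H : SimpleGraph V} [DecidableRel H.Adj]
  {X Y s : Finset V}

theorem mem_biUnion_neighborFinset_of_card_sdiff_lt (hY : ∀ y ∈ Y, ∀ x, H.Adj y x → x ∈ X)
    {y : V} (hy : y ∈ Y) (hdeg : #(X \ s) < H.degree y) :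
    y ∈ s.biUnion fun v => H.neighborFinset v := by
  by_contra hys
  refine (card_le_card fun x hx => ?_).not_gt (card_neighborFinset_eq_degree H y ▸ hdeg)
  rw [mem_neighborFinset] at hx
  refine mem_sdiff.2 ⟨hY y hy x hx, fun hxs => hys ?_⟩
  exact mem_biUnion.2 ⟨x, hxs, (mem_neighborFinset _ _ _).2 hx.symm⟩

theorem card_filter_le_card_biUnion_neighborFinset (hY : ∀ y ∈ Y, ∀ x, H.Adj y x → x ∈ X)
    {p : V → Prop} [DecidablePred p] (hp : ∀ y ∈ Y, p y → #(X \ s) < H.degree y) :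
    #{y ∈ Y | p y} ≤ #(s.biUnion fun v => H.neighborFinset v) :=
  card_le_card fun y hy =>
    mem_biUnion_neighborFinset_of_card_sdiff_lt hY (mem_filter.1 hy).1
      (hp y (mem_filter.1 hy).1 (mem_filter.1 hy).2)

theorem degree_le_card_biUnion_neighborFinset {x : V} (hx : x ∈ s) :
    H.degree x ≤ #(s.biUnion fun v => H.neighborFinset v) := by
  rw [← card_neighborFinset_eq_degree]
  exact card_le_card (subset_biUnion_of_mem (fun v => H.neighborFinset v) hx)

theorem le_card_biUnion_neighborFinset_add_card_sdiff (hY : ∀ y ∈ Y, ∀ x, H.Adj y x → x ∈ X)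
    {N m : ℕ} (hP₁ : m ≤ #{x ∈ X | N < 4 * H.degree x})
    (hP₂ : m ≤ #{y ∈ Y | N < 4 * H.degree y})
    (hQ : m ≤ #{x ∈ X | 4 * m < N + 4 * H.degree x} + #{y ∈ Y | 4 * m < N + 4 * H.degree y})
    (s : Finset V) : m ≤ #(s.biUnion fun v => H.neighborFinset v) + #(X \ s) := by
  by_cases hr : 4 * #(X \ s) ≤ N
  · have := card_filter_le_card_biUnion_neighborFinset (s := s) hY
      (p := fun y => N < 4 * H.degree y) fun y _ hy => by omega
    omega
  by_cases hQs : ∃ x ∈ s, 4 * m < N + 4 * H.degree x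
  · obtain ⟨x, hxs, hx⟩ := hQs
    have := degree_le_card_biUnion_neighborFinset (H := H) hxs
    omega
  have hQ₁ := card_filter_le_card_sdiff (X := X) fun x hx hQx => hQs ⟨x, hx, hQx⟩
  by_cases hr' : N + 4 * #(X \ s) < 4 * m
  · have := card_filter_le_card_biUnion_neighborFinset (s := s) hY
      (p := fun y => 4 * m < N + 4 * H.degree y) fun y _ hy => by omega
    omega
  by_cases hPs : ∃ x ∈ s, N < 4 * H.degree x
  · obtain ⟨x, hxs, hx⟩ := hPs
    have := degree_le_card_biUnion_neighborFinset (H := H) hxs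
    omega
  have hP₁' := card_filter_le_card_sdiff (X := X) fun x hx hPx => hPs ⟨x, hx, hPx⟩
  omega

end SimpleGraph

theorem connMatching_of_injOn {V : Type*} [Fintype V] {H : SimpleGraph V} {S : Finset V}
    {f : V → V} {c : H.ConnectedComponent} (hf : Set.InjOn f S) (hadj : ∀ x ∈ S, H.Adj x (f x))
    (hout : ∀ x ∈ S, f x ∉ S) (hc : ∀ x ∈ S, H.connectedComponentMk x = c) :
    ConnMatching H #S := by
  have hne : ∀ x ∈ S, ∀ y ∈ S, x ≠ f y := fun x hx y hy h => hout y hy (h ▸ hx)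
  refine ⟨⨆ x : S, H.subgraphOfAdj (hadj x x.2), ?_, ?_, c, ?_⟩
  · refine Subgraph.IsMatching.iSup (fun x => .subgraphOfAdj _) fun x y hxy => ?_
    have hxy' : (x : V) ≠ y := fun h => hxy (Subtype.ext h)
    simp only [support_subgraphOfAdj, Set.disjoint_insert_left, Set.disjoint_insert_right,
      Set.disjoint_singleton_left, Set.mem_insert_iff, Set.mem_singleton_iff, not_or]
    exact ⟨⟨Ne.symm hxy', hne y y.2 x x.2⟩, hne x x.2 y y.2, fun h => hxy' (hf x.2 y.2 h)⟩
  · rw [Subgraph.edgeSet_iSup]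
    simp only [edgeSet_subgraphOfAdj]
    rw [show (⋃ x : S, {s((x : V), f x)}) = (fun x => s(x, f x)) '' (S : Set V) by
      ext; simp [eq_comm], Set.InjOn.ncard_image, Set.ncard_coe_finset]
    intro x hx y hy h
    rcases Sym2.eq_iff.1 h with ⟨h, -⟩ | ⟨h, -⟩
    · exact h
    · exact absurd h (hne x hx y hy)
  · simp only [Subgraph.verts_iSup, subgraphOfAdj_verts, Set.mem_iUnion, Set.mem_insert_iff,
      Set.mem_singleton_iff]
    rintro v ⟨x, rfl | rfl⟩
    · exact hc x x.2
    · exact (ConnectedComponent.connectedComponentMk_eq_of_adj (hadj x x.2)).symm.trans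
        (hc x x.2)

namespace SimpleGraph.ConnectedComponent

variable {V : Type*} {H : SimpleGraph V} {S : Finset V} {c c' c'' : H.ConnectedComponent}

open Classical in
noncomputable def part (c : H.ConnectedComponent) (S : Finset V) : Finset V :=
  {x ∈ S | H.connectedComponentMk x = c}

theorem mem_part {x : V} : x ∈ c.part S ↔ x ∈ S ∧ H.connectedComponentMk x = c := by
  simp [part]

theorem part_subset : c.part S ⊆ S := fun _ hx => (mem_part.1 hx).1

theorem coe_part : (c.part S : Set V) = (S : Set V) ∩ c.supp := by
  ext; simp [mem_part]

theorem disjoint_part (h : c ≠ c') : Disjoint (c.part S) (c'.part S) :=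
  Finset.disjoint_left.2 fun _ hx hx' => h ((mem_part.1 hx).2.symm.trans (mem_part.1 hx').2)

theorem card_part_add_card_part_le (h : c ≠ c') : #(c.part S) + #(c'.part S) ≤ #S := by
  classical
  rw [← card_union_of_disjoint (disjoint_part h)]
  exact Finset.card_le_card (union_subset part_subset part_subset)

theorem card_part_add_card_part_add_card_part_le (h : c ≠ c') (h' : c ≠ c'') (h'' : c' ≠ c'') :
    #(c.part S) + #(c'.part S) + #(c''.part S) ≤ #S := by
  classical
  rw [← card_union_of_disjoint (disjoint_part h), ← card_union_of_disjoint
    (Finset.disjoint_union_left.2 ⟨disjoint_part h', disjoint_part h''⟩)]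
  exact Finset.card_le_card (union_subset (union_subset part_subset part_subset) part_subset)

theorem card_le_card_part_add_card_part
    (h : ∀ x ∈ S, H.connectedComponentMk x = c ∨ H.connectedComponentMk x = c') :
    #S ≤ #(c.part S) + #(c'.part S) := by
  classical
  refine (Finset.card_le_card fun x hx => ?_).trans (card_union_le _ _)
  rcases h x hx with hc | hc
  · exact Finset.mem_union_left _ (mem_part.2 ⟨hx, hc⟩)
  · exact Finset.mem_union_right _ (mem_part.2 ⟨hx, hc⟩)

theorem four_mul_card_part_lt_of_ne {N : ℕ} (hS : #S = N) (hc : 2 * N < 4 * #(c.part S))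
    (h : c' ≠ c) : 4 * #(c'.part S) < 2 * N := by
  have := card_part_add_card_part_le (S := S) h
  omega

theorem card_filter_ne [DecidableEq V] [DecidableEq H.ConnectedComponent] :
    #{x ∈ S | H.connectedComponentMk x ≠ c} = #S - #(c.part S) := by
  rw [← card_sdiff_of_subset part_subset]
  refine congrArg card (Finset.ext fun x => ?_)
  simp only [Finset.mem_filter, Finset.mem_sdiff, mem_part]
  tauto

theorem card_filter_eq_sum_card_part [Fintype H.ConnectedComponent]
    (p : H.ConnectedComponent → Prop) [DecidablePred p] :
    #{x ∈ S | p (H.connectedComponentMk x)} = ∑ c with p c, #(c.part S) := by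
  classical
  rw [← card_biUnion fun c _ c' _ h => disjoint_part h]
  refine congrArg card (Finset.ext fun x => ?_)
  simp only [Finset.mem_filter, Finset.mem_biUnion, Finset.mem_univ, true_and, mem_part]
  exact ⟨fun ⟨hx, hp⟩ => ⟨_, hp, hx, rfl⟩, fun ⟨c, hp, hx, hc⟩ => ⟨hx, hc ▸ hp⟩⟩

end SimpleGraph.ConnectedComponent

structure DenseInto {V : Type*} (R B : SimpleGraph V) (W₁ W₂ : Finset V) (N : ℕ) : Prop where
  card_eq : #W₂ = N
  mem_of_adj : ∀ ⦃u w⦄, u ∈ W₁ → (R ⊔ B).Adj u w → w ∈ W₂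
  three_mul_lt : ∀ u ∈ W₁, 3 * N < 4 * ((R ⊔ B).neighborSet u).ncard

namespace DenseInto

open scoped Classical
open ConnectedComponent

variable {V : Type*} {R B : SimpleGraph V} {W₁ W₂ : Finset V} {N : ℕ}
  (h : DenseInto R B W₁ W₂ N) {u u' : V}
include h

theorem three_mul_lt_card_of_adj (hu : u ∈ W₁) {S : Finset V}
    (hS : ∀ w, (R ⊔ B).Adj u w → w ∈ S) : 3 * N < 4 * #S := by
  have := Set.ncard_le_ncard (s := (R ⊔ B).neighborSet u) (t := S) hS
  rw [Set.ncard_coe_finset] at this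
  have := h.three_mul_lt u hu
  omega

theorem four_mul_card_lt_of_not_adj (hu : u ∈ W₁) {T : Finset V} (hT : T ⊆ W₂)
    (hn : ∀ w ∈ T, ¬ (R ⊔ B).Adj u w) : 4 * #T < N := by
  have := h.three_mul_lt_card_of_adj hu (S := W₂ \ T) fun w hw =>
    Finset.mem_sdiff.2 ⟨h.mem_of_adj hu hw, fun hwT => hn w hwT hw⟩
  have := Finset.card_le_card hT
  rw [card_sdiff_of_subset hT, h.card_eq] at *
  omega

theorem red_adj_mem_part (hu : u ∈ W₁) {w : V} (hw : R.Adj u w) :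
    w ∈ (R.connectedComponentMk u).part W₂ :=
  mem_part.2 ⟨h.mem_of_adj hu (Or.inl hw), (connectedComponentMk_eq_of_adj hw).symm⟩

theorem blue_adj_mem_part (hu : u ∈ W₁) {w : V} (hw : B.Adj u w) :
    w ∈ (B.connectedComponentMk u).part W₂ :=
  mem_part.2 ⟨h.mem_of_adj hu (Or.inr hw), (connectedComponentMk_eq_of_adj hw).symm⟩

theorem three_mul_lt_card_part_add_card_part (hu : u ∈ W₁) :
    3 * N < 4 * #((R.connectedComponentMk u).part W₂) +
      4 * #((B.connectedComponentMk u).part W₂) := by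
  have := h.three_mul_lt_card_of_adj hu fun w hw => hw.elim
    (fun hr => Finset.mem_union_left _ (h.red_adj_mem_part hu hr))
    (fun hb => Finset.mem_union_right _ (h.blue_adj_mem_part hu hb))
  have := card_union_le ((R.connectedComponentMk u).part W₂) ((B.connectedComponentMk u).part W₂)
  omega

theorem three_mul_lt_degree_add_card_part [Fintype V] (hu : u ∈ W₁) :
    3 * N < 4 * R.degree u + 4 * #((B.connectedComponentMk u).part W₂) := by
  have := h.three_mul_lt_card_of_adj hu fun w hw => hw.elim
    (fun hr => Finset.mem_union_left _ ((mem_neighborFinset R u w).2 hr))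
    (fun hb => Finset.mem_union_right _ (h.blue_adj_mem_part hu hb))
  have := card_union_le (R.neighborFinset u) ((B.connectedComponentMk u).part W₂)
  rw [card_neighborFinset_eq_degree] at this
  omega

theorem four_mul_card_sdiff_lt (hu : u ∈ W₁) {d : R.ConnectedComponent}
    (hd : R.connectedComponentMk u ≠ d) :
    4 * #(d.part W₂ \ (B.connectedComponentMk u).part W₂) < N := by
  refine h.four_mul_card_lt_of_not_adj hu (sdiff_subset.trans part_subset) fun w hw hadj => ?_
  obtain ⟨hwd, hwb⟩ := Finset.mem_sdiff.1 hw
  rcases hadj with hr | hb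
  · exact hd ((connectedComponentMk_eq_of_adj hr).trans (mem_part.1 hwd).2)
  · exact hwb (h.blue_adj_mem_part hu hb)

/-- More than half of `W₂` is adjacent to both `u` and `u'`, so a common neighbour outside their
blue components joins them by red edges. -/
theorem red_cc_eq_of_four_mul_card_union_le (hu : u ∈ W₁) (hu' : u' ∈ W₁)
    (hb : 4 * #((B.connectedComponentMk u).part W₂ ∪ (B.connectedComponentMk u').part W₂) ≤
      2 * N) :
    R.connectedComponentMk u = R.connectedComponentMk u' := by
  set T := (B.connectedComponentMk u).part W₂ ∪ (B.connectedComponentMk u').part W₂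
  by_contra hne
  have hcover : W₂ \ T ⊆
      {w ∈ W₂ \ T | ¬ (R ⊔ B).Adj u w} ∪ {w ∈ W₂ \ T | ¬ (R ⊔ B).Adj u' w} := by
    intro w hw
    have hwT := (Finset.mem_sdiff.1 hw).2
    by_contra hboth
    simp only [Finset.mem_union, Finset.mem_filter, hw, true_and, not_or, not_not] at hboth
    obtain ⟨hr | hb, hr' | hb'⟩ := hboth
    · exact hne ((connectedComponentMk_eq_of_adj hr).trans
        (connectedComponentMk_eq_of_adj hr').symm)
    · exact hwT (Finset.mem_union_right _ (h.blue_adj_mem_part hu' hb'))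
    all_goals exact hwT (Finset.mem_union_left _ (h.blue_adj_mem_part hu hb))
  have := h.four_mul_card_lt_of_not_adj hu (T := {w ∈ W₂ \ T | ¬ (R ⊔ B).Adj u w})
    (filter_subset _ _ |>.trans sdiff_subset) fun w hw => (Finset.mem_filter.1 hw).2
  have := h.four_mul_card_lt_of_not_adj hu' (T := {w ∈ W₂ \ T | ¬ (R ⊔ B).Adj u' w})
    (filter_subset _ _ |>.trans sdiff_subset) fun w hw => (Finset.mem_filter.1 hw).2
  have := (Finset.card_le_card hcover).trans (card_union_le _ _)
  have := le_card_sdiff T W₂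
  rw [h.card_eq] at this
  omega

theorem red_cc_eq_of_blue_cc_eq (hu : u ∈ W₁) (hu' : u' ∈ W₁)
    (hb : 4 * #((B.connectedComponentMk u).part W₂) ≤ 2 * N)
    (hbb : B.connectedComponentMk u = B.connectedComponentMk u') :
    R.connectedComponentMk u = R.connectedComponentMk u' :=
  h.red_cc_eq_of_four_mul_card_union_le hu hu' (by rwa [← hbb, Finset.union_self])

theorem red_cc_eq_of_blue_cc_ne (hu : u ∈ W₁) (hu' : u' ∈ W₁) {c : B.ConnectedComponent}
    (hc : 2 * N < 4 * #(c.part W₂)) (huc : B.connectedComponentMk u ≠ c)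
    (hu'c : B.connectedComponentMk u' ≠ c) :
    R.connectedComponentMk u = R.connectedComponentMk u' := by
  by_cases hbb : B.connectedComponentMk u = B.connectedComponentMk u'
  · exact h.red_cc_eq_of_blue_cc_eq hu hu' (four_mul_card_part_lt_of_ne h.card_eq hc huc).le hbb
  refine h.red_cc_eq_of_four_mul_card_union_le hu hu' ?_
  have := card_part_add_card_part_add_card_part_le (S := W₂) hbb huc hu'c
  have := card_union_le ((B.connectedComponentMk u).part W₂) ((B.connectedComponentMk u').part W₂)
  rw [h.card_eq] at *
  omega

theorem exists_red_adj_blue_cc_ne (hu : u ∈ W₁)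
    (hb : 4 * #((B.connectedComponentMk u).part W₂) ≤ 3 * N) :
    ∃ w ∈ W₂, R.Adj u w ∧ B.connectedComponentMk w ≠ B.connectedComponentMk u := by
  by_contra! hno
  refine (h.three_mul_lt_card_of_adj hu fun w hw => ?_).not_ge hb
  rcases hw with hr | hb
  · exact mem_part.2 ⟨h.mem_of_adj hu (Or.inl hr), hno w (h.mem_of_adj hu (Or.inl hr)) hr⟩
  · exact h.blue_adj_mem_part hu hb

theorem exists_red_cc_eq_blue_cc_eq (hu : u ∈ W₁) (hu' : u' ∈ W₁)
    (hne : R.connectedComponentMk u ≠ R.connectedComponentMk u')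
    (hb' : 4 * #((B.connectedComponentMk u').part W₂) ≤ 2 * N) :
    ∃ w ∈ W₂, R.connectedComponentMk w = R.connectedComponentMk u' ∧
      B.connectedComponentMk w = B.connectedComponentMk u := by
  by_contra! hno
  have hdisj : Disjoint ((R.connectedComponentMk u').part W₂)
      ((B.connectedComponentMk u).part W₂) := Finset.disjoint_left.2 fun w hw hw' =>
    hno w (part_subset hw) (mem_part.1 hw).2 (mem_part.1 hw').2
  have := h.four_mul_card_sdiff_lt hu hne
  rw [sdiff_eq_self_of_disjoint hdisj] at this
  have := h.three_mul_lt_card_part_add_card_part hu'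
  omega

end DenseInto

section Rich

open scoped Classical
open ConnectedComponent

variable {V : Type*} [Fintype V] {R B : SimpleGraph V} {W₁ W₂ : Finset V} {N t m : ℕ}

theorem le_card_filter_add_card_filter (hW₁ : #W₁ = N)
    (hstar : ∀ c : B.ConnectedComponent, #(c.part W₁) ≤ t ∨ #(c.part W₂) ≤ t) :
    N ≤ #{u ∈ W₁ | #((B.connectedComponentMk u).part W₂) ≤ t} +
      #{w ∈ W₂ | #((B.connectedComponentMk w).part W₁) ≤ t} := by
  have hfat : #{u ∈ W₁ | t < #((B.connectedComponentMk u).part W₂)} ≤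
      #{w ∈ W₂ | t < #((B.connectedComponentMk w).part W₂)} := by
    rw [card_filter_eq_sum_card_part (fun c => t < #(c.part W₂)),
      card_filter_eq_sum_card_part (fun c => t < #(c.part W₂))]
    refine sum_le_sum fun c hc => ?_
    have := (Finset.mem_filter.1 hc).2
    have := hstar c
    omega
  have hsub : {w ∈ W₂ | t < #((B.connectedComponentMk w).part W₂)} ⊆
      {w ∈ W₂ | #((B.connectedComponentMk w).part W₁) ≤ t} := fun w hw => by
    simp only [Finset.mem_filter] at hw ⊢
    exact ⟨hw.1, (hstar _).resolve_right hw.2.not_ge⟩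
  have := Finset.card_le_card hsub
  have := card_filter_add_card_filter_not (s := W₁)
    fun u => #((B.connectedComponentMk u).part W₂) ≤ t
  simp only [not_le] at this
  omega

def IsRich (R : SimpleGraph V) (W₁ W₂ : Finset V) (N m : ℕ) (d : R.ConnectedComponent) : Prop :=
  m ≤ #{u ∈ d.part W₁ | N < 4 * R.degree u} ∧ m ≤ #{w ∈ d.part W₂ | N < 4 * R.degree w} ∧
    m ≤ #{u ∈ d.part W₁ | 4 * m < N + 4 * R.degree u} +
      #{w ∈ d.part W₂ | 4 * m < N + 4 * R.degree w}

theorem IsRich.symm {d : R.ConnectedComponent} (h : IsRich R W₁ W₂ N m d) :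
    IsRich R W₂ W₁ N m d :=
  ⟨h.2.1, h.1, by have := h.2.2; omega⟩

theorem DenseInto.card_le_card_filter_of_four_mul_card_part_le (h : DenseInto R B W₁ W₂ N)
    {A : Finset V} {d : R.ConnectedComponent}
    (hA : ∀ u ∈ A, u ∈ W₁ ∧ R.connectedComponentMk u = d ∧
      4 * #((B.connectedComponentMk u).part W₂) ≤ 2 * N) :
    #A ≤ #{u ∈ d.part W₁ | N < 4 * R.degree u} := by
  refine Finset.card_le_card fun u hu => ?_
  obtain ⟨huW, hud, hb⟩ := hA u hu
  have := h.three_mul_lt_degree_add_card_part huW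
  exact Finset.mem_filter.2 ⟨mem_part.2 ⟨huW, hud⟩, by omega⟩

theorem DenseInto.card_le_card_filter_of_card_part_le (h : DenseInto R B W₁ W₂ N)
    (hmt : m + t = N) {A : Finset V} {d : R.ConnectedComponent}
    (hA : ∀ u ∈ A, u ∈ W₁ ∧ R.connectedComponentMk u = d ∧
      #((B.connectedComponentMk u).part W₂) ≤ t) :
    #A ≤ #{u ∈ d.part W₁ | 4 * m < N + 4 * R.degree u} := by
  refine Finset.card_le_card fun u hu => ?_
  obtain ⟨huW, hud, hb⟩ := hA u hu
  have := h.three_mul_lt_degree_add_card_part huW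
  exact Finset.mem_filter.2 ⟨mem_part.2 ⟨huW, hud⟩, by omega⟩

theorem isRich_of_forall (h₁ : DenseInto R B W₁ W₂ N) (h₂ : DenseInto R B W₂ W₁ N)
    (hmt : m + t = N) (hstar : ∀ c : B.ConnectedComponent, #(c.part W₁) ≤ t ∨ #(c.part W₂) ≤ t)
    {K : R.ConnectedComponent} {A₁ A₂ : Finset V} (hm₁ : m ≤ #A₁) (hm₂ : m ≤ #A₂)
    (hA₁ : ∀ u ∈ A₁, u ∈ W₁ ∧ R.connectedComponentMk u = K ∧
      4 * #((B.connectedComponentMk u).part W₂) ≤ 2 * N)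
    (hA₂ : ∀ w ∈ A₂, w ∈ W₂ ∧ R.connectedComponentMk w = K ∧
      4 * #((B.connectedComponentMk w).part W₁) ≤ 2 * N)
    (hthin₁ : ∀ u ∈ W₁, #((B.connectedComponentMk u).part W₂) ≤ t →
      R.connectedComponentMk u = K)
    (hthin₂ : ∀ w ∈ W₂, #((B.connectedComponentMk w).part W₁) ≤ t →
      R.connectedComponentMk w = K) :
    IsRich R W₁ W₂ N m K := by
  refine ⟨hm₁.trans (h₁.card_le_card_filter_of_four_mul_card_part_le hA₁),
    hm₂.trans (h₂.card_le_card_filter_of_four_mul_card_part_le hA₂), ?_⟩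
  have := le_card_filter_add_card_filter h₂.card_eq hstar
  have := h₁.card_le_card_filter_of_card_part_le hmt (d := K)
    (A := {u ∈ W₁ | #((B.connectedComponentMk u).part W₂) ≤ t}) fun u hu => by
      obtain ⟨huW, hut⟩ := Finset.mem_filter.1 hu
      exact ⟨huW, hthin₁ u huW hut, hut⟩
  have := h₂.card_le_card_filter_of_card_part_le hmt (d := K)
    (A := {w ∈ W₂ | #((B.connectedComponentMk w).part W₁) ≤ t}) fun w hw => by
      obtain ⟨hwW, hwt⟩ := Finset.mem_filter.1 hw
      exact ⟨hwW, hthin₂ w hwW hwt, hwt⟩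
  omega

theorem connMatching_of_isRich (hdisj : Disjoint W₁ W₂)
    (hside₁ : ∀ ⦃u w⦄, u ∈ W₁ → R.Adj u w → w ∈ W₂)
    (hside₂ : ∀ ⦃w u⦄, w ∈ W₂ → R.Adj w u → u ∈ W₁) {d : R.ConnectedComponent}
    (hd : IsRich R W₁ W₂ N m d) : ConnMatching R m := by
  have : Nonempty V := ⟨Quot.out d⟩
  have hY : ∀ y ∈ d.part W₂, ∀ x, R.Adj y x → x ∈ d.part W₁ := fun y hy x hyx =>
    mem_part.2 ⟨hside₂ (part_subset hy) hyx,
      (connectedComponentMk_eq_of_adj hyx).symm.trans (mem_part.1 hy).2⟩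
  obtain ⟨S, hSX, hS, f, hf, hfr⟩ := exists_injOn_of_le_card_biUnion_add_card_sdiff
    fun s _ => le_card_biUnion_neighborFinset_add_card_sdiff hY hd.1 hd.2.1 hd.2.2 s
  have hadj : ∀ x ∈ S, R.Adj x (f x) := fun x hx => (mem_neighborFinset _ _ _).1 (hfr x hx)
  rw [← hS]
  refine connMatching_of_injOn hf hadj (fun x hx hfx => ?_) fun x hx => (mem_part.1 (hSX hx)).2
  exact Finset.disjoint_left.1 hdisj (part_subset (hSX hfx))
    (hside₁ (part_subset (hSX hx)) (hadj x hx))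

end Rich

section Balanced

open scoped Classical
open ConnectedComponent

variable {V : Type*} {R B : SimpleGraph V} {W₁ W₂ : Finset V} {N : ℕ}
  (h₁ : DenseInto R B W₁ W₂ N) (h₂ : DenseInto R B W₂ W₁ N) {u u' v : V}
include h₁ h₂

theorem three_mul_lt_card_red_part_add_card_blue_part (hu : u ∈ W₁) (hu' : u' ∈ W₁)
    (hne : R.connectedComponentMk u ≠ R.connectedComponentMk u')
    (hb' : 4 * #((B.connectedComponentMk u').part W₂) ≤ 2 * N) :
    3 * N < 4 * #((R.connectedComponentMk u').part W₁) +
      4 * #((B.connectedComponentMk u).part W₁) := by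
  obtain ⟨w, hw, hwr, hwb⟩ := h₁.exists_red_cc_eq_blue_cc_eq hu hu' hne hb'
  simpa [hwr, hwb] using h₂.three_mul_lt_card_part_add_card_part hw

variable (hnoc : ∀ c : B.ConnectedComponent, 4 * #(c.part W₂) ≤ 2 * N)
include hnoc

omit h₂ in
theorem blue_part_subset_red_part (hu : u ∈ W₁) :
    (B.connectedComponentMk u).part W₁ ⊆ (R.connectedComponentMk u).part W₁ := fun _ hx =>
  mem_part.2 ⟨part_subset hx,
    (h₁.red_cc_eq_of_blue_cc_eq hu (part_subset hx) (hnoc _) (mem_part.1 hx).2.symm).symm⟩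

theorem three_mul_lt_card_red_part_add_card_red_part (hu : u ∈ W₁) (hu' : u' ∈ W₁)
    (hne : R.connectedComponentMk u ≠ R.connectedComponentMk u') :
    3 * N < 4 * #((R.connectedComponentMk u').part W₁) +
      4 * #((R.connectedComponentMk u).part W₁) := by
  have := three_mul_lt_card_red_part_add_card_blue_part h₁ h₂ hu hu' hne (hnoc _)
  have := Finset.card_le_card (blue_part_subset_red_part h₁ hnoc hu)
  omega

theorem red_cc_eq_or_eq (hu : u ∈ W₁) (hu' : u' ∈ W₁) (hv : v ∈ W₁)
    (hne : R.connectedComponentMk u ≠ R.connectedComponentMk u') :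
    R.connectedComponentMk v = R.connectedComponentMk u ∨
      R.connectedComponentMk v = R.connectedComponentMk u' := by
  by_contra! hv'
  have := three_mul_lt_card_red_part_add_card_red_part h₁ h₂ hnoc hu hu' hne
  have := three_mul_lt_card_red_part_add_card_red_part h₁ h₂ hnoc hu hv hv'.1.symm
  have := three_mul_lt_card_red_part_add_card_red_part h₁ h₂ hnoc hu' hv hv'.2.symm
  have := card_part_add_card_part_add_card_part_le (S := W₁) hne hv'.1.symm hv'.2.symm
  rw [h₂.card_eq] at this
  omega

theorem card_red_part_add_card_red_part (hu : u ∈ W₁) (hu' : u' ∈ W₁)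
    (hne : R.connectedComponentMk u ≠ R.connectedComponentMk u') :
    #((R.connectedComponentMk u).part W₁) + #((R.connectedComponentMk u').part W₁) = N := by
  have := card_le_card_part_add_card_part fun v hv => red_cc_eq_or_eq h₁ h₂ hnoc hu hu' hv hne
  have := card_part_add_card_part_le (S := W₁) hne
  rw [h₂.card_eq] at *
  omega

theorem two_mul_card_red_part_lt_or_subset (hu : u ∈ W₁) (hu' : u' ∈ W₁)
    (hne : R.connectedComponentMk u ≠ R.connectedComponentMk u') :
    2 * #((R.connectedComponentMk u).part W₁) < N ∨
      (R.connectedComponentMk u).part W₁ ⊆ (B.connectedComponentMk u).part W₁ := by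
  refine or_iff_not_imp_right.2 fun hno => ?_
  obtain ⟨v, hvr, hvb⟩ := Finset.not_subset.1 hno
  obtain ⟨hv, hvr⟩ := mem_part.1 hvr
  replace hvb : B.connectedComponentMk v ≠ B.connectedComponentMk u :=
    fun h => hvb (mem_part.2 ⟨hv, h⟩)
  have := three_mul_lt_card_red_part_add_card_blue_part h₁ h₂ hu hu' hne (hnoc _)
  have := three_mul_lt_card_red_part_add_card_blue_part h₁ h₂ hv hu' (hvr ▸ hne) (hnoc _)
  have := card_red_part_add_card_red_part h₁ h₂ hnoc hu hu' hne
  have := Finset.card_le_card (Finset.union_subset (blue_part_subset_red_part h₁ hnoc hu)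
    (hvr ▸ blue_part_subset_red_part h₁ hnoc hv))
  rw [card_union_of_disjoint (disjoint_part hvb.symm)] at this
  omega

/-- Two red components meeting `W₁` split it into halves, each a single blue component. -/
theorem two_mul_card_blue_part_eq (hnod : ∀ c : B.ConnectedComponent, 4 * #(c.part W₁) ≤ 2 * N)
    (hu : u ∈ W₁) (hu' : u' ∈ W₁) (hne : R.connectedComponentMk u ≠ R.connectedComponentMk u') :
    2 * #((B.connectedComponentMk u).part W₁) = N := by
  have := card_red_part_add_card_red_part h₁ h₂ hnoc hu hu' hne
  have := Finset.card_le_card (blue_part_subset_red_part h₁ hnoc hu)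
  have := hnod (B.connectedComponentMk u)
  have := hnod (B.connectedComponentMk u')
  have hle' : 2 * #((R.connectedComponentMk u').part W₁) ≤ N := by
    rcases two_mul_card_red_part_lt_or_subset h₁ h₂ hnoc hu' hu hne.symm with h | h
    · omega
    · have := Finset.card_le_card h
      omega
  rcases two_mul_card_red_part_lt_or_subset h₁ h₂ hnoc hu hu' hne with h | h
  · omega
  · have := Finset.card_le_card h
    omega

theorem red_cc_eq_of_forall_le_of_forall_le
    (hnod : ∀ c : B.ConnectedComponent, 4 * #(c.part W₁) ≤ 2 * N) {t : ℕ}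
    (hstar : ∀ c : B.ConnectedComponent, #(c.part W₁) ≤ t ∨ #(c.part W₂) ≤ t) (ht : 2 * t < N)
    (hu : u ∈ W₁) (hu' : u' ∈ W₁) : R.connectedComponentMk u = R.connectedComponentMk u' := by
  by_contra hne
  obtain ⟨w, hw, hwr, hwb⟩ := h₁.exists_red_cc_eq_blue_cc_eq hu hu' hne (hnoc _)
  obtain ⟨w', hw', hwr', -⟩ := h₁.exists_red_cc_eq_blue_cc_eq hu' hu (Ne.symm hne) (hnoc _)
  have ha := two_mul_card_blue_part_eq h₁ h₂ hnoc hnod hu hu' hne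
  have hb := two_mul_card_blue_part_eq h₂ h₁ hnod hnoc hw hw' (by rw [hwr, hwr']; exact Ne.symm hne)
  rw [hwb] at hb
  have := hstar (B.connectedComponentMk u)
  omega

end Balanced

section Rogue

open scoped Classical
open ConnectedComponent

variable {V : Type*} {R B : SimpleGraph V} {W₁ W₂ : Finset V} {N t : ℕ}
  {d : B.ConnectedComponent} {K : R.ConnectedComponent}
  (hK : ∀ x ∈ W₂, B.connectedComponentMk x ≠ d → R.connectedComponentMk x = K) {u u' : V}
include hK

theorem red_part_subset_of_red_cc_ne (huK : R.connectedComponentMk u ≠ K) :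
    (R.connectedComponentMk u).part W₂ ⊆ d.part W₂ := fun x hx => by
  obtain ⟨hx, hxu⟩ := mem_part.1 hx
  by_contra hxd
  exact huK (hxu ▸ hK x hx fun h => hxd (mem_part.2 ⟨hx, h⟩))

variable (h₁ : DenseInto R B W₁ W₂ N)
include h₁

theorem three_mul_lt_of_red_cc_ne (hu : u ∈ W₁) (huK : R.connectedComponentMk u ≠ K) :
    3 * N < 4 * #(d.part W₂) + 4 * #((B.connectedComponentMk u).part W₂) := by
  have := h₁.three_mul_lt_card_part_add_card_part hu
  have := Finset.card_le_card (red_part_subset_of_red_cc_ne hK huK)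
  omega

variable (hdt : #(d.part W₂) ≤ t) (ht : 2 * t < N)
include hdt ht

theorem blue_cc_ne_of_red_cc_ne (hu : u ∈ W₁) (huK : R.connectedComponentMk u ≠ K) :
    B.connectedComponentMk u ≠ d := by
  intro hud
  have := h₁.three_mul_lt_card_of_adj hu (S := d.part W₂) fun w hw =>
    hw.elim (fun hr => red_part_subset_of_red_cc_ne hK huK
        (mem_part.2 ⟨h₁.mem_of_adj hu (Or.inl hr), (connectedComponentMk_eq_of_adj hr).symm⟩))
      (fun hb => hud ▸ h₁.blue_adj_mem_part hu hb)
  omega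

theorem red_cc_eq_of_mem_part {v : V} (hv : v ∈ d.part W₁) : R.connectedComponentMk v = K :=
  by_contra fun hvK => blue_cc_ne_of_red_cc_ne hK h₁ hdt ht (part_subset hv) hvK (mem_part.1 hv).2

theorem blue_cc_eq_of_red_cc_ne (hu : u ∈ W₁) (hu' : u' ∈ W₁) (huK : R.connectedComponentMk u ≠ K)
    (hu'K : R.connectedComponentMk u' ≠ K) :
    B.connectedComponentMk u = B.connectedComponentMk u' := by
  by_contra hne
  have := three_mul_lt_of_red_cc_ne hK h₁ hu huK
  have := three_mul_lt_of_red_cc_ne hK h₁ hu' hu'K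
  have := card_part_add_card_part_add_card_part_le (S := W₂) hne
    (blue_cc_ne_of_red_cc_ne hK h₁ hdt ht hu huK) (blue_cc_ne_of_red_cc_ne hK h₁ hdt ht hu' hu'K)
  rw [h₁.card_eq] at this
  omega

variable (hnoc : ∀ c : B.ConnectedComponent, 4 * #(c.part W₂) ≤ 2 * N)
include hnoc

theorem blue_cc_eq_or_eq (hu : u ∈ W₁) (huK : R.connectedComponentMk u ≠ K) {v : V}
    (hv : v ∈ W₁) :
    B.connectedComponentMk v = B.connectedComponentMk u ∨ B.connectedComponentMk v = d := by
  by_contra! hvb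
  have hvK : R.connectedComponentMk v = K := by
    by_contra hvK
    exact hvb.1 (blue_cc_eq_of_red_cc_ne hK h₁ hdt ht hv hu hvK huK)
  have hsub := red_part_subset_of_red_cc_ne hK huK
  have hdisj : Disjoint ((R.connectedComponentMk u).part W₂) ((B.connectedComponentMk v).part W₂) :=
    (disjoint_part hvb.2.symm).mono_left hsub
  have := h₁.four_mul_card_sdiff_lt hv (d := R.connectedComponentMk u) (hvK ▸ Ne.symm huK)
  rw [sdiff_eq_self_of_disjoint hdisj] at this
  have := h₁.three_mul_lt_card_part_add_card_part hu
  have := hnoc (B.connectedComponentMk u)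
  omega

theorem four_mul_card_blue_part_lt (h₂ : DenseInto R B W₂ W₁ N) (hu : u ∈ W₁)
    (huK : R.connectedComponentMk u ≠ K) : 4 * #((B.connectedComponentMk u).part W₁) < N := by
  obtain ⟨w, hw, hwu, hwd⟩ : ∃ w ∈ W₂, B.connectedComponentMk w ≠ B.connectedComponentMk u ∧
      B.connectedComponentMk w ≠ d := by
    by_contra! hno
    have hle := card_le_card_part_add_card_part fun w hw => (em _).imp_right (hno w hw)
    have := hnoc (B.connectedComponentMk u)
    rw [h₁.card_eq] at hle
    omega
  have hempty : (B.connectedComponentMk w).part W₁ = ∅ := Finset.eq_empty_of_forall_notMem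
    fun v hv => (blue_cc_eq_or_eq hK h₁ hdt ht hnoc hu huK (part_subset hv)).elim
      (fun h => hwu ((mem_part.1 hv).2.symm.trans h))
      (fun h => hwd ((mem_part.1 hv).2.symm.trans h))
  have := h₂.three_mul_lt_card_part_add_card_part hw
  rw [hempty, hK w hw hwd, Finset.card_empty] at this
  have hle := card_part_add_card_part_le (S := W₁) huK
  rw [h₂.card_eq] at hle
  have := Finset.card_le_card (blue_part_subset_red_part h₁ hnoc hu)
  omega

theorem le_card_part_of_red_cc_ne (h₂ : DenseInto R B W₂ W₁ N) {m : ℕ} (hmt : m + t = N)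
    (hu : u ∈ W₁) (huK : R.connectedComponentMk u ≠ K) : m ≤ #(d.part W₁) := by
  have := card_le_card_part_add_card_part fun v hv => blue_cc_eq_or_eq hK h₁ hdt ht hnoc hu huK hv
  rw [h₂.card_eq] at this
  have := four_mul_card_blue_part_lt hK h₁ hdt ht hnoc h₂ hu huK
  have := three_mul_lt_of_red_cc_ne hK h₁ hu huK
  have := hnoc (B.connectedComponentMk u)
  omega

end Rogue

section Cases

open scoped Classical
open ConnectedComponent

variable {V : Type*} [Fintype V] {R B : SimpleGraph V} {W₁ W₂ : Finset V} {N t m : ℕ}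
  (h₁ : DenseInto R B W₁ W₂ N) (h₂ : DenseInto R B W₂ W₁ N) (hmt : m + t = N)
  (hstar : ∀ c : B.ConnectedComponent, #(c.part W₁) ≤ t ∨ #(c.part W₂) ≤ t)
include h₁ h₂ hmt hstar

theorem exists_isRich_of_forall_le_of_forall_le (ht : 2 * t < N)
    (hnoc : ∀ c : B.ConnectedComponent, 4 * #(c.part W₂) ≤ 2 * N)
    (hnod : ∀ c : B.ConnectedComponent, 4 * #(c.part W₁) ≤ 2 * N) :
    ∃ K : R.ConnectedComponent, IsRich R W₁ W₂ N m K := by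
  obtain ⟨u, hu⟩ : W₁.Nonempty := card_pos.1 (by rw [h₂.card_eq]; omega)
  obtain ⟨w, hw, hadj, -⟩ := h₁.exists_red_adj_blue_cc_ne hu
    (by have := hnoc (B.connectedComponentMk u); omega)
  have hK₁ : ∀ v ∈ W₁, R.connectedComponentMk v = R.connectedComponentMk u := fun v hv =>
    red_cc_eq_of_forall_le_of_forall_le h₁ h₂ hnoc hnod hstar ht hv hu
  have hK₂ : ∀ x ∈ W₂, R.connectedComponentMk x = R.connectedComponentMk u := fun x hx =>
    (red_cc_eq_of_forall_le_of_forall_le h₂ h₁ hnod hnoc (fun c => (hstar c).symm) ht hx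
      hw).trans (connectedComponentMk_eq_of_adj hadj).symm
  exact ⟨_, isRich_of_forall h₁ h₂ hmt hstar (A₁ := W₁) (A₂ := W₂)
    (by rw [h₂.card_eq]; omega) (by rw [h₁.card_eq]; omega)
    (fun v hv => ⟨hv, hK₁ v hv, hnoc _⟩) (fun x hx => ⟨hx, hK₂ x hx, hnod _⟩)
    (fun v hv _ => hK₁ v hv) (fun x hx _ => hK₂ x hx)⟩

theorem exists_isRich_of_large_of_large (ht : 2 * t < N) {c d : B.ConnectedComponent}
    (hc : 2 * N < 4 * #(c.part W₂)) (hd : 2 * N < 4 * #(d.part W₁)) :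
    ∃ K : R.ConnectedComponent, IsRich R W₁ W₂ N m K := by
  have hct : #(c.part W₁) ≤ t := (hstar c).resolve_right (by omega)
  have hdt : #(d.part W₂) ≤ t := (hstar d).resolve_left (by omega)
  obtain ⟨u, hu⟩ : (d.part W₁).Nonempty := card_pos.1 (by omega)
  obtain ⟨hu, hud⟩ := mem_part.1 hu
  have hdc : d ≠ c := by rintro rfl; omega
  obtain ⟨w, hw, hadj, hwd⟩ := h₁.exists_red_adj_blue_cc_ne hu (by rw [hud]; omega)
  rw [hud] at hwd
  have hK₁ : ∀ v ∈ W₁, B.connectedComponentMk v ≠ c →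
      R.connectedComponentMk v = R.connectedComponentMk u := fun v hv hvc =>
    h₁.red_cc_eq_of_blue_cc_ne hv hu hc hvc (hud ▸ hdc)
  have hK₂ : ∀ x ∈ W₂, B.connectedComponentMk x ≠ d →
      R.connectedComponentMk x = R.connectedComponentMk u := fun x hx hxd =>
    (h₂.red_cc_eq_of_blue_cc_ne hx hw hd hxd hwd).trans
      (connectedComponentMk_eq_of_adj hadj).symm
  refine ⟨_, isRich_of_forall h₁ h₂ hmt hstar (A₁ := {v ∈ W₁ | B.connectedComponentMk v ≠ c})
    (A₂ := {x ∈ W₂ | B.connectedComponentMk x ≠ d}) ?_ ?_ (fun v hv => ?_) (fun x hx => ?_)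
    (fun v hv hvt => hK₁ v hv ?_) (fun x hx hxt => hK₂ x hx ?_)⟩
  · rw [card_filter_ne, h₂.card_eq]; omega
  · rw [card_filter_ne, h₁.card_eq]; omega
  · obtain ⟨hv, hvc⟩ := Finset.mem_filter.1 hv
    exact ⟨hv, hK₁ v hv hvc, (four_mul_card_part_lt_of_ne h₁.card_eq hc hvc).le⟩
  · obtain ⟨hx, hxd⟩ := Finset.mem_filter.1 hx
    exact ⟨hx, hK₂ x hx hxd, (four_mul_card_part_lt_of_ne h₂.card_eq hd hxd).le⟩
  · rintro hvc; rw [hvc] at hvt; omega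
  · rintro hxd; rw [hxd] at hxt; omega

theorem exists_isRich_of_large_of_forall_le (ht : 2 * t < N)
    {d : B.ConnectedComponent} (hd : 2 * N < 4 * #(d.part W₁))
    (hnoc : ∀ c : B.ConnectedComponent, 4 * #(c.part W₂) ≤ 2 * N) :
    ∃ K : R.ConnectedComponent, IsRich R W₁ W₂ N m K := by
  have hdt : #(d.part W₂) ≤ t := (hstar d).resolve_left (by omega)
  have hm₂ : m ≤ #{x ∈ W₂ | B.connectedComponentMk x ≠ d} := by
    rw [card_filter_ne, h₁.card_eq]; omega
  obtain ⟨w₀, hw₀⟩ := card_pos.1 (hm₂.trans_lt' (by omega))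
  obtain ⟨hw₀, hw₀d⟩ := Finset.mem_filter.1 hw₀
  have hK : ∀ x ∈ W₂, B.connectedComponentMk x ≠ d →
      R.connectedComponentMk x = R.connectedComponentMk w₀ := fun x hx hxd =>
    h₂.red_cc_eq_of_blue_cc_ne hx hw₀ hd hxd hw₀d
  have hA₂ : ∀ x ∈ {x ∈ W₂ | B.connectedComponentMk x ≠ d}, x ∈ W₂ ∧
      R.connectedComponentMk x = R.connectedComponentMk w₀ ∧
      4 * #((B.connectedComponentMk x).part W₁) ≤ 2 * N := fun x hx => by
    obtain ⟨hx, hxd⟩ := Finset.mem_filter.1 hx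
    exact ⟨hx, hK x hx hxd, (four_mul_card_part_lt_of_ne h₂.card_eq hd hxd).le⟩
  by_cases hall : ∀ v ∈ W₁, R.connectedComponentMk v = R.connectedComponentMk w₀
  · refine ⟨_, isRich_of_forall h₁ h₂ hmt hstar (A₁ := W₁) (by rw [h₂.card_eq]; omega) hm₂
      (fun v hv => ⟨hv, hall v hv, hnoc _⟩) hA₂ (fun v hv _ => hall v hv)
      (fun x hx hxt => hK x hx ?_)⟩
    rintro hxd
    rw [hxd] at hxt
    omega
  push Not at hall
  obtain ⟨u, hu, huK⟩ := hall
  have hdK := fun v (hv : v ∈ d.part W₁) => red_cc_eq_of_mem_part hK h₁ hdt ht hv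
  have hmd := le_card_part_of_red_cc_ne hK h₁ hdt ht hnoc h₂ hmt hu huK
  have hP₁ := h₁.card_le_card_filter_of_four_mul_card_part_le (A := d.part W₁)
    fun v hv => ⟨part_subset hv, hdK v hv, hnoc _⟩
  have hQ₁ := h₁.card_le_card_filter_of_card_part_le hmt (A := d.part W₁)
    fun v hv => ⟨part_subset hv, hdK v hv, (mem_part.1 hv).2 ▸ hdt⟩
  exact ⟨_, hmd.trans hP₁, hm₂.trans (h₂.card_le_card_filter_of_four_mul_card_part_le hA₂),
    hmd.trans (hQ₁.trans (Nat.le_add_right _ _))⟩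

theorem exists_isRich (ht : 2 * t < N) : ∃ K : R.ConnectedComponent, IsRich R W₁ W₂ N m K := by
  have hstar' : ∀ c : B.ConnectedComponent, #(c.part W₂) ≤ t ∨ #(c.part W₁) ≤ t :=
    fun c => (hstar c).symm
  by_cases hc : ∃ c : B.ConnectedComponent, 2 * N < 4 * #(c.part W₂)
  all_goals by_cases hd : ∃ d : B.ConnectedComponent, 2 * N < 4 * #(d.part W₁)
  · obtain ⟨c, hc⟩ := hc
    obtain ⟨d, hd⟩ := hd
    exact exists_isRich_of_large_of_large h₁ h₂ hmt hstar ht hc hd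
  · obtain ⟨c, hc⟩ := hc
    obtain ⟨K, hK⟩ := exists_isRich_of_large_of_forall_le h₂ h₁ hmt hstar' ht hc
      fun d => not_lt.1 (not_exists.1 hd d)
    exact ⟨K, hK.symm⟩
  · obtain ⟨d, hd⟩ := hd
    exact exists_isRich_of_large_of_forall_le h₁ h₂ hmt hstar ht hd
      fun c => not_lt.1 (not_exists.1 hc c)
  · exact exists_isRich_of_forall_le_of_forall_le h₁ h₂ hmt hstar ht
      (fun c => not_lt.1 (not_exists.1 hc c)) (fun d => not_lt.1 (not_exists.1 hd d))

end Cases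

theorem stmt_2_general {V : Type*} [Fintype V] (m n : ℕ) (hn : 1 ≤ n) (hmn : n < m)
    (G : SimpleGraph V) (V1 V2 : Finset V)
    (hdisj : Disjoint V1 V2)
    (hV1 : V1.card = m + n - 1) (hV2 : V2.card = m + n - 1)
    (hbip : ∀ x y, G.Adj x y → (x ∈ V1 ∧ y ∈ V2) ∨ (x ∈ V2 ∧ y ∈ V1))
    (hδ : ∀ v, 3 * (m + n - 1) < 4 * (G.neighborSet v).ncard)
    (R B : SimpleGraph V) (hcolor : R ⊔ B = G)
    (hnored : ¬ ConnMatching R m) :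
    ∃ c : B.ConnectedComponent,
        n ≤ ((V1 : Set V) ∩ c.supp).ncard ∧ n ≤ ((V2 : Set V) ∩ c.supp).ncard := by
  subst hcolor
  by_contra! hcon
  simp only [← ConnectedComponent.coe_part, Set.ncard_coe_finset] at hcon
  have hstar (c : B.ConnectedComponent) : #(c.part V1) ≤ n - 1 ∨ #(c.part V2) ≤ n - 1 := by
    by_cases h : n ≤ #(c.part V1)
    · exact Or.inr (by have := hcon c h; omega)
    · exact Or.inl (by omega)
  have h₁ : DenseInto R B V1 V2 (m + n - 1) := ⟨hV2, fun u w hu huw =>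
    ((hbip u w huw).resolve_right fun h => Finset.disjoint_left.1 hdisj hu h.1).2, fun u _ => hδ u⟩
  have h₂ : DenseInto R B V2 V1 (m + n - 1) := ⟨hV1, fun w u hw hwu =>
    ((hbip w u hwu).resolve_left fun h => Finset.disjoint_left.1 hdisj h.1 hw).2, fun w _ => hδ w⟩
  obtain ⟨d, hd⟩ := exists_isRich h₁ h₂ (m := m) (t := n - 1) (by omega) hstar (by omega)
  exact hnored (connMatching_of_isRich hdisj (fun _ _ hu h => h₁.mem_of_adj hu (Or.inl h))
    (fun _ _ hw h => h₂.mem_of_adj hw (Or.inl h)) hd)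

theorem stmt_2 {V : Type*} [Fintype V] [DecidableEq V] (m n : ℕ) (hn : 1 ≤ n) (hmn : n < m)
    (G : SimpleGraph V) (V1 V2 : Finset V)
    (hdisj : Disjoint V1 V2) (hcover : V1 ∪ V2 = Finset.univ)
    (hV1 : V1.card = m + n - 1) (hV2 : V2.card = m + n - 1)
    (hbip : ∀ x y, G.Adj x y → (x ∈ V1 ∧ y ∈ V2) ∨ (x ∈ V2 ∧ y ∈ V1))
    (hδ : ∀ v, 3 * (m + n - 1) < 4 * (G.neighborSet v).ncard)
    (R B : SimpleGraph V) (hcolor : R ⊔ B = G) (hcdisj : Disjoint R B)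
    (hnored : ¬ ConnMatching R m) :
    ∃ c : B.ConnectedComponent,
        n ≤ ((V1 : Set V) ∩ c.supp).ncard ∧ n ≤ ((V2 : Set V) ∩ c.supp).ncard :=
  stmt_2_general m n hn hmn G V1 V2 hdisj hV1 hV2 hbip hδ R B hcolor hnored
end

section
/- In any bipartite graph, the number of edges in a maximum matching equals the number of vertices in a minimum vertex cover (König–Egerváry theorem). -/
open SimpleGraph Set

/-- Hall-type lemma: from a minimum vertex cover `C`, the part `C ∩ V1` can be matched
injectively into `V2 \ C`. -/
lemma konig_aux_hall {V : Type*} [Fintype V] [DecidableEq V]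
    (G : SimpleGraph V) (V1 V2 : Finset V)
    (hdisj : Disjoint V1 V2)
    (hbip : ∀ x y, G.Adj x y → (x ∈ V1 ∧ y ∈ V2) ∨ (x ∈ V2 ∧ y ∈ V1))
    (C : Set V) (hC : ∀ x y, G.Adj x y → x ∈ C ∨ y ∈ C)
    (hmin : ∀ C' : Set V, (∀ x y, G.Adj x y → x ∈ C' ∨ y ∈ C') → C.ncard ≤ C'.ncard) :
    ∃ f : ↥(C ∩ ↑V1) → V, Function.Injective f ∧
      ∀ a : ↥(C ∩ ↑V1), G.Adj ↑a (f a) ∧ (f a) ∈ V2 ∧ (f a) ∉ C := by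
  classical
  set A : Set V := C ∩ ↑V1 with hA
  let t : ↥A → Finset V := fun a => Finset.univ.filter (fun w => G.Adj a w ∧ w ∈ V2 ∧ w ∉ C)
  have hall : ∀ s : Finset ↥A, s.card ≤ (s.biUnion t).card := by
    intro s
    set S : Set V := Subtype.val '' (↑s : Set ↥A) with hS
    set N : Finset V := s.biUnion t with hN
    have hSC : S ⊆ C := by rintro _ ⟨a, _, rfl⟩; exact a.2.1
    have hSV1 : S ⊆ ↑V1 := by rintro _ ⟨a, _, rfl⟩; exact a.2.2
    have key : ∀ x y, G.Adj x y → x ∈ C → x ∈ C \ S ∪ ↑N ∨ y ∈ C \ S ∪ ↑N := by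
      intro x y hxy hxC
      by_cases hxS : x ∈ S
      · obtain ⟨a, ha, rfl⟩ := hxS
        have hxV1 : (a : V) ∈ V1 := a.2.2
        have hyV2 : y ∈ V2 := by
          rcases hbip _ _ hxy with ⟨_, h⟩ | ⟨h, _⟩
          · exact h
          · exact absurd h (Finset.disjoint_left.mp hdisj hxV1)
        by_cases hyC : y ∈ C
        · refine Or.inr (Or.inl ⟨hyC, fun hyS => ?_⟩)
          exact Finset.disjoint_left.mp hdisj (hSV1 hyS) hyV2
        · refine Or.inr (Or.inr ?_)
          rw [hN, Finset.coe_biUnion]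
          refine Set.mem_biUnion (Finset.mem_coe.mpr ha) ?_
          simp only [t, Finset.coe_filter, Set.mem_setOf_eq]
          exact ⟨Finset.mem_univ _, hxy, hyV2, hyC⟩
      · exact Or.inl (Or.inl ⟨hxC, hxS⟩)
    have cover' : ∀ x y, G.Adj x y → x ∈ C \ S ∪ ↑N ∨ y ∈ C \ S ∪ ↑N := by
      intro x y hxy
      rcases hC x y hxy with h | h
      · exact key x y hxy h
      · exact (key y x hxy.symm h).symm
    have h1 := hmin _ cover'
    have e1 : (C \ S).ncard + S.ncard = C.ncard :=
      Set.ncard_diff_add_ncard_of_subset hSC (Set.toFinite C)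
    have e2 : (C \ S ∪ ↑N).ncard ≤ (C \ S).ncard + (↑N : Set V).ncard :=
      Set.ncard_union_le _ _
    have e3 : (↑N : Set V).ncard = N.card := Set.ncard_coe_finset N
    have e4 : S.ncard = s.card := by
      rw [hS, Set.ncard_image_of_injective _ Subtype.val_injective, Set.ncard_coe_finset]
    omega
  obtain ⟨f, hfinj, hft⟩ := (Finset.all_card_le_biUnion_card_iff_existsInjective' t).mp hall
  refine ⟨f, hfinj, fun a => ?_⟩
  have := hft a
  simpa only [t, Finset.mem_filter, Finset.mem_univ, true_and] using this


/-- In a matching, an edge containing a vertex is `s(v, w)` for an `M`-neighbor `w`. -/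
lemma konig_edge_of_mem {V : Type*} {G : SimpleGraph V} {M : G.Subgraph}
    {e : Sym2 V} {v : V} (he : e ∈ M.edgeSet) (hv : v ∈ e) :
    ∃ w, M.Adj v w ∧ e = s(v, w) := by
  induction e with
  | _ x y =>
    rw [Sym2.mem_iff] at hv
    rw [SimpleGraph.Subgraph.mem_edgeSet] at he
    rcases hv with rfl | rfl
    · exact ⟨y, he, rfl⟩
    · exact ⟨x, he.symm, Sym2.eq_swap⟩

/-- Easy direction: any matching has at most as many edges as any vertex cover. -/
lemma konig_nu_le_tau {V : Type*} [Fintype V] {G : SimpleGraph V} (M : G.Subgraph)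
    (hM : M.IsMatching) (C : Set V) (hC : ∀ x y, G.Adj x y → x ∈ C ∨ y ∈ C) :
    M.edgeSet.ncard ≤ C.ncard := by
  classical
  cases isEmpty_or_nonempty V with
  | inl h =>
    have : M.edgeSet = ∅ := by
      ext e
      induction e with
      | _ x y => exact (IsEmpty.false x).elim
    simp [this]
  | inr h =>
    have hex : ∀ e ∈ M.edgeSet, ∃ v, v ∈ C ∧ v ∈ e := by
      intro e he
      induction e with
      | _ x y =>
        rw [SimpleGraph.Subgraph.mem_edgeSet] at he
        rcases hC x y (he.adj_sub) with hx | hy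
        · exact ⟨x, hx, by simp⟩
        · exact ⟨y, hy, by simp⟩
    set ψ : Sym2 V → V := fun e =>
      if h : ∃ v, v ∈ C ∧ v ∈ e then h.choose else Classical.arbitrary V with hψ
    have hmem : ∀ e ∈ M.edgeSet, ψ e ∈ C ∧ ψ e ∈ e := by
      intro e he
      have h' := hex e he
      simp only [hψ, dif_pos h']
      exact h'.choose_spec
    apply Set.ncard_le_ncard_of_injOn ψ (fun e he => (hmem e he).1) ?_ (Set.toFinite C)
    intro e1 h1 e2 h2 heq
    obtain ⟨w1, ha1, he1⟩ := konig_edge_of_mem h1 (hmem e1 h1).2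
    obtain ⟨w2, ha2, he2⟩ := konig_edge_of_mem h2 (heq ▸ (hmem e2 h2).2)
    obtain ⟨w, -, huniq⟩ := hM (M.edge_vert ha1)
    rw [he1, he2, huniq w1 ha1, huniq w2 ha2]

/-- Hard direction: from a minimum vertex cover, construct a matching of the same size. -/
lemma konig_tau_le_nu {V : Type*} [Fintype V] [DecidableEq V]
    (G : SimpleGraph V) (V1 V2 : Finset V)
    (hdisj : Disjoint V1 V2) (hcover : V1 ∪ V2 = Finset.univ)
    (hbip : ∀ x y, G.Adj x y → (x ∈ V1 ∧ y ∈ V2) ∨ (x ∈ V2 ∧ y ∈ V1))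
    (C : Set V) (hC : ∀ x y, G.Adj x y → x ∈ C ∨ y ∈ C)
    (hmin : ∀ C' : Set V, (∀ x y, G.Adj x y → x ∈ C' ∨ y ∈ C') → C.ncard ≤ C'.ncard) :
    ∃ M : G.Subgraph, M.IsMatching ∧ C.ncard ≤ M.edgeSet.ncard := by
  classical
  set A : Set V := C ∩ ↑V1 with hA
  set B : Set V := C ∩ ↑V2 with hB
  obtain ⟨f, hfinj, hf⟩ := konig_aux_hall G V1 V2 hdisj hbip C hC hmin
  obtain ⟨g, hginj, hg⟩ := konig_aux_hall G V2 V1 hdisj.symm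
    (fun x y h => (hbip x y h).symm) C hC hmin
  have hAV1 : A ⊆ ↑V1 := fun v hv => hv.2
  have hBV2 : B ⊆ ↑V2 := fun v hv => hv.2
  have hAC : A ⊆ C := fun v hv => hv.1
  have hBC : B ⊆ C := fun v hv => hv.1
  have hrfV2 : Set.range f ⊆ ↑V2 := by rintro _ ⟨a, rfl⟩; exact (hf a).2.1
  have hrfC : ∀ v ∈ Set.range f, v ∉ C := by rintro _ ⟨a, rfl⟩; exact (hf a).2.2
  have hrgV1 : Set.range g ⊆ ↑V1 := by rintro _ ⟨b, rfl⟩; exact (hg b).2.1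
  have hrgC : ∀ v ∈ Set.range g, v ∉ C := by rintro _ ⟨b, rfl⟩; exact (hg b).2.2
  have hdisjS : Disjoint (↑V1 : Set V) ↑V2 := by
    rw [Finset.disjoint_coe]; exact hdisj
  have hdV1V2 : ∀ {s t : Set V}, s ⊆ ↑V1 → t ⊆ ↑V2 → Disjoint s t :=
    fun hs ht => (hdisjS.mono hs ht)
  have hdC : ∀ {s t : Set V}, s ⊆ C → (∀ v ∈ t, v ∉ C) → Disjoint s t := by
    intro s t hs ht
    rw [Set.disjoint_right]
    intro v hv
    exact fun hvs => ht v hv (hs hvs)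
  -- two matchings
  obtain ⟨M1, hM1v, hM1⟩ := SimpleGraph.Subgraph.IsMatching.exists_of_disjoint_sets_of_equiv
    (G := G) (s := A) (t := Set.range f) (hdC hAC hrfC)
    (Equiv.ofInjective f hfinj) (fun v => by simpa using (hf v).1)
  obtain ⟨M2, hM2v, hM2⟩ := SimpleGraph.Subgraph.IsMatching.exists_of_disjoint_sets_of_equiv
    (G := G) (s := B) (t := Set.range g) (hdC hBC hrgC)
    (Equiv.ofInjective g hginj) (fun v => by simpa using (hg v).1)
  have hdisjM : Disjoint M1.verts M2.verts := by
    rw [hM1v, hM2v, Set.disjoint_union_left, Set.disjoint_union_right,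
      Set.disjoint_union_right]
    exact ⟨⟨hdV1V2 hAV1 hBV2, hdC hAC hrgC⟩,
      ⟨(hdC hBC hrfC).symm, (hdV1V2 hrgV1 hrfV2).symm⟩⟩
  have hMmatch : (M1 ⊔ M2).IsMatching :=
    hM1.sup hM2 (by rwa [hM1.support_eq_verts, hM2.support_eq_verts])
  set M := M1 ⊔ M2 with hM
  refine ⟨M, hMmatch, ?_⟩
  have hMv : M.verts = (A ∪ Set.range f) ∪ (B ∪ Set.range g) := by
    rw [hM, SimpleGraph.Subgraph.verts_sup, hM1v, hM2v]
  have hCeq : C = A ∪ B := by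
    ext v
    constructor
    · intro hv
      have : v ∈ V1 ∪ V2 := hcover ▸ Finset.mem_univ v
      rcases Finset.mem_union.mp this with h | h
      · exact Or.inl ⟨hv, h⟩
      · exact Or.inr ⟨hv, h⟩
    · rintro (h | h) <;> exact h.1
  have hCverts : C ⊆ M.verts := by
    rw [hCeq, hMv]
    exact Set.union_subset (fun v hv => Or.inl (Or.inl hv)) (fun v hv => Or.inr (Or.inl hv))
  -- every M-neighbor of a cover vertex is outside the cover
  have key : ∀ c ∈ C, ∀ w, M.Adj c w → w ∉ C := by
    intro c hc w hcw hwC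
    rw [hCeq] at hc
    have hwv1 : w ∈ M1.verts → w ∈ A ∪ Set.range f := fun h => hM1v ▸ h
    rcases hc with hcA | hcB
    · rcases SimpleGraph.Subgraph.sup_adj.mp hcw with h | h
      · have hw : w ∈ A ∪ Set.range f := hM1v ▸ M1.edge_vert h.symm
        rcases hw with hwA | hwrf
        · -- both c, w in V1, contradiction with bipartiteness
          rcases hbip c w (h.adj_sub) with ⟨_, hwV2⟩ | ⟨hcV2, _⟩
          · exact Finset.disjoint_left.mp hdisj (hwA.2) hwV2
          · exact Finset.disjoint_left.mp hdisj (hcA.2) hcV2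
        · exact hrfC w hwrf hwC
      · have hcv : c ∈ B ∪ Set.range g := hM2v ▸ M2.edge_vert h
        rcases hcv with hcB | hcrg
        · exact Finset.disjoint_left.mp hdisj hcA.2 hcB.2
        · exact hrgC c hcrg hcA.1
    · rcases SimpleGraph.Subgraph.sup_adj.mp hcw with h | h
      · have hcv : c ∈ A ∪ Set.range f := hM1v ▸ M1.edge_vert h
        rcases hcv with hcA | hcrf
        · exact Finset.disjoint_left.mp hdisj hcA.2 hcB.2
        · exact hrfC c hcrf hcB.1
      · have hw : w ∈ B ∪ Set.range g := hM2v ▸ M2.edge_vert h.symm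
        rcases hw with hwB | hwrg
        · rcases hbip c w (h.adj_sub) with ⟨hcV1, _⟩ | ⟨_, hwV1⟩
          · exact Finset.disjoint_left.mp hdisj hcV1 hcB.2
          · exact Finset.disjoint_left.mp hdisj hwV1 hwB.2
        · exact hrgC w hwrg hwC
  -- inject C into the edge set via the partner function
  set p : V → V := fun v => if h : v ∈ M.verts then (hMmatch h).choose else v with hp
  have hpadj : ∀ v ∈ M.verts, M.Adj v (p v) := by
    intro v hv
    simp only [hp, dif_pos hv]
    exact (hMmatch hv).choose_spec.1
  apply Set.ncard_le_ncard_of_injOn (fun c => s(c, p c))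
    (fun c hc => SimpleGraph.Subgraph.mem_edgeSet.mpr (hpadj c (hCverts hc)))
    ?_ (Set.toFinite _)
  intro c1 h1 c2 h2 heq
  simp only [Sym2.eq, Sym2.rel_iff', Prod.mk.injEq, Prod.swap_prod_mk] at heq
  rcases heq with ⟨h, -⟩ | ⟨hc1, -⟩
  · exact h
  · exact absurd h1 (hc1 ▸ key c2 h2 (p c2) (hpadj c2 (hCverts h2)))

/-- The König–Egerváry theorem: in any bipartite graph, the maximum number of edges in
a matching equals the minimum number of vertices in a vertex cover. -/
theorem stmt_4 {V : Type*} [Fintype V] [DecidableEq V]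
    (G : SimpleGraph V) (V1 V2 : Finset V)
    (hdisj : Disjoint V1 V2) (hcover : V1 ∪ V2 = Finset.univ)
    (hbip : ∀ x y, G.Adj x y → (x ∈ V1 ∧ y ∈ V2) ∨ (x ∈ V2 ∧ y ∈ V1)) :
    sSup {k : ℕ | ∃ M : G.Subgraph, M.IsMatching ∧ M.edgeSet.ncard = k} =
      sInf {k : ℕ | ∃ C : Set V, (∀ x y, G.Adj x y → x ∈ C ∨ y ∈ C) ∧ C.ncard = k} := by
  classical
  set Smatch := {k : ℕ | ∃ M : G.Subgraph, M.IsMatching ∧ M.edgeSet.ncard = k} with hSm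
  set Scover := {k : ℕ | ∃ C : Set V, (∀ x y, G.Adj x y → x ∈ C ∨ y ∈ C) ∧ C.ncard = k}
    with hSc
  have h0 : (0 : ℕ) ∈ Smatch := by
    refine ⟨⊥, fun v hv => absurd hv (by simp [SimpleGraph.Subgraph.verts_bot]), ?_⟩
    simp [SimpleGraph.Subgraph.edgeSet_bot]
  have hBdd : BddAbove Smatch := by
    refine ⟨Nat.card (Sym2 V), ?_⟩
    rintro k ⟨M, hM, rfl⟩
    calc M.edgeSet.ncard ≤ (Set.univ : Set (Sym2 V)).ncard :=
          Set.ncard_le_ncard (Set.subset_univ _) Set.finite_univ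
      _ = Nat.card (Sym2 V) := Set.ncard_univ _
  obtain ⟨Mmax, hMmax, hMeq⟩ := Nat.sSup_mem ⟨0, h0⟩ hBdd
  have hcovne : Scover.Nonempty :=
    ⟨(Set.univ : Set V).ncard, Set.univ, fun x y _ => Or.inl trivial, rfl⟩
  obtain ⟨Cmin, hCmin, hCeq⟩ := Nat.sInf_mem hcovne
  have hmin : ∀ C' : Set V, (∀ x y, G.Adj x y → x ∈ C' ∨ y ∈ C') → Cmin.ncard ≤ C'.ncard := by
    intro C' hC'
    rw [hCeq]
    exact Nat.sInf_le ⟨C', hC', rfl⟩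
  apply le_antisymm
  · rw [← hMeq, ← hCeq]
    exact konig_nu_le_tau Mmax hMmax Cmin hCmin
  · obtain ⟨M, hM, hle⟩ := konig_tau_le_nu G V1 V2 hdisj hcover hbip Cmin hCmin hmin
    rw [← hCeq]
    exact le_trans hle (le_csSup hBdd ⟨M, hM, rfl⟩)
end

section
/- Let n < m < 3n with m+n-1 divisible by 4. There exists a balanced bipartite graph G with parts X, Y each of size m+n-1 and minimum degree exactly (3/4)(m+n-1), together with a red-blue edge-coloring of G, such that G has no red connected matching of size m and no blue connected matching of size n. -/
/-!
Split each side into four blocks `X_i`, `Y_i` of size `q = (m + n - 1) / 4`. Blue edges join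
`X_i` to `Y_i` and red edges join `X_1 ∪ X_2` to `Y_3 ∪ Y_4` and `X_3 ∪ X_4` to `Y_1 ∪ Y_2`, so
every vertex has `q` blue and `2q` red neighbours. A blue component meets `X` inside a single
`X_i`, a red component meets `X` inside `X_1 ∪ X_2` or inside `X_3 ∪ X_4`. Every edge of a
matching in a bipartite graph has its own endpoint in `X`, so a connected blue matching has at
most `q < n` edges and a connected red one at most `2q < m` edges.
-/

open SimpleGraph Set

namespace SimpleGraph

variable {V γ : Type*} {G : SimpleGraph V}

lemma Reachable.eq_of_forall_adj {F : V → γ} (hF : ∀ ⦃u v⦄, G.Adj u v → F u = F v)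
    {u v : V} (h : G.Reachable u v) : F u = F v := by
  obtain ⟨p⟩ := h
  induction p with
  | nil => rfl
  | cons hadj _ ih => exact (hF hadj).trans ih

lemma Subgraph.IsMatching.ncard_edgeSet_le [Finite V] {M : G.Subgraph} (hM : M.IsMatching)
    {S : Set V} (hS : ∀ ⦃v w⦄, M.Adj v w → v ∈ S ∨ w ∈ S) :
    M.edgeSet.ncard ≤ (M.verts ∩ S).ncard := by
  classical
  let edgeAt : V → Sym2 V := fun v =>
    if hv : v ∈ M.verts then hM.toEdge ⟨v, hv⟩ else s(v, v)
  have hsub : M.edgeSet ⊆ edgeAt '' (M.verts ∩ S) := by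
    intro e he
    induction e using Sym2.ind with
    | h v w =>
      rcases hS he with hv | hw
      · exact ⟨v, ⟨he.fst_mem, hv⟩, by simp [edgeAt, he.fst_mem, hM.toEdge_eq_of_adj he]⟩
      · refine ⟨w, ⟨he.snd_mem, hw⟩, ?_⟩
        simp [edgeAt, he.snd_mem, hM.toEdge_eq_of_adj he.symm, Sym2.eq_swap]
  exact (ncard_le_ncard hsub).trans (ncard_image_le (toFinite _))

variable {α β : Type*}

def bipartiteGraph (r : α → β → Prop) : SimpleGraph (α ⊕ β) where
  Adj
    | .inl x, .inr y => r x y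
    | .inr y, .inl x => r x y
    | _, _ => False
  symm := ⟨by rintro (x | y) (x' | y') h <;> exact h⟩
  loopless := ⟨by rintro (x | y) h <;> exact h⟩

variable {r s : α → β → Prop}

@[simp] lemma bipartiteGraph_adj_inl_inr {x : α} {y : β} :
    (bipartiteGraph r).Adj (.inl x) (.inr y) ↔ r x y := Iff.rfl

@[simp] lemma bipartiteGraph_adj_inr_inl {x : α} {y : β} :
    (bipartiteGraph r).Adj (.inr y) (.inl x) ↔ r x y := Iff.rfl

@[simp] lemma bipartiteGraph_not_adj_inl_inl {x x' : α} :
    ¬ (bipartiteGraph r).Adj (.inl x) (.inl x') := id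

@[simp] lemma bipartiteGraph_not_adj_inr_inr {y y' : β} :
    ¬ (bipartiteGraph r).Adj (.inr y) (.inr y') := id

lemma bipartiteGraph_le_completeBipartiteGraph :
    bipartiteGraph r ≤ completeBipartiteGraph α β := by
  rintro (x | y) (x' | y') h <;> simp_all

lemma bipartiteGraph_sup :
    bipartiteGraph r ⊔ bipartiteGraph s = bipartiteGraph fun x y => r x y ∨ s x y := by
  ext (x | y) (x' | y') <;> simp

lemma disjoint_bipartiteGraph (h : ∀ x y, r x y → ¬ s x y) :
    Disjoint (bipartiteGraph r) (bipartiteGraph s) := by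
  rw [disjoint_iff]
  ext (x | y) (x' | y') <;> simp <;> exact h _ _

lemma neighborSet_bipartiteGraph_inl (x : α) :
    (bipartiteGraph r).neighborSet (.inl x) = .inr '' {y | r x y} := by
  ext (x' | y) <;> simp

lemma neighborSet_bipartiteGraph_inr (y : β) :
    (bipartiteGraph r).neighborSet (.inr y) = .inl '' {x | r x y} := by
  ext (x | y') <;> simp

end SimpleGraph

section Fibers

variable {α ι κ : Type*} {p : α → ι} {q : ℕ}

lemma ncard_setOf_fst_equiv_eq (e : α ≃ ι × κ) (i : ι) :
    {x | (e x).1 = i}.ncard = Nat.card κ := by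
  have : {x | (e x).1 = i} = e ⁻¹' ({i} ×ˢ univ) := by ext; simp
  rw [this, ncard_preimage_of_injective_subset_range e.injective (by simp), ncard_prod,
    ncard_singleton, ncard_univ, one_mul]

variable [Finite α]

lemma ncard_setOf_mem_finset (hp : ∀ i, {x | p x = i}.ncard = q) (T : Finset ι) :
    {x | p x ∈ T}.ncard = T.card * q := by
  classical
  induction T using Finset.induction_on with
  | empty => simp
  | insert i T hi ih =>
    have hunion : {x | p x ∈ insert i T} = {x | p x = i} ∪ {x | p x ∈ T} := by ext; simp
    have hdisj : Disjoint {x | p x = i} {x | p x ∈ T} :=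
      Set.disjoint_left.2 fun x hx hxT => hi (hx ▸ hxT)
    rw [hunion, ncard_union_eq hdisj, hp, ih, Finset.card_insert_of_notMem hi]
    ring

lemma ncard_setOf_comp [Fintype ι] (hp : ∀ i, {x | p x = i}.ncard = q) (P : ι → Prop)
    [DecidablePred P] : {x | P (p x)}.ncard = (Finset.univ.filter P).card * q := by
  rw [← ncard_setOf_mem_finset hp]
  simp

end Fibers

lemma ConnMatching.exists_le_ncard_fiber {α β γ : Type*} [Fintype α] [Fintype β]
    {H : SimpleGraph (α ⊕ β)} (hH : H ≤ completeBipartiteGraph α β) (F : α ⊕ β → γ)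
    (hF : ∀ ⦃u v⦄, H.Adj u v → F u = F v) {k : ℕ} (h : ConnMatching H k) :
    ∃ c, k ≤ {x | F (.inl x) = c}.ncard := by
  obtain ⟨M, hM, rfl, c, hc⟩ := h
  obtain ⟨v₀, rfl⟩ := c.exists_rep
  have hleft : ∀ ⦃v w⦄, M.Adj v w → v ∈ range Sum.inl ∨ w ∈ range Sum.inl := by
    intro v w hvw
    have := hH (M.adj_sub hvw)
    simp only [completeBipartiteGraph_adj] at this
    rcases v with x | y <;> rcases w with x' | y' <;> simp_all
  have hverts : M.verts ∩ range Sum.inl ⊆ Sum.inl '' {x | F (.inl x) = F v₀} := by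
    rintro _ ⟨hv, x, rfl⟩
    exact ⟨x, (ConnectedComponent.exact (hc _ hv)).eq_of_forall_adj hF, rfl⟩
  refine ⟨F v₀, ?_⟩
  calc M.edgeSet.ncard ≤ (M.verts ∩ range Sum.inl).ncard := hM.ncard_edgeSet_le hleft
    _ ≤ (Sum.inl '' {x | F (.inl x) = F v₀}).ncard := ncard_le_ncard hverts
    _ = _ := ncard_image_of_injective _ Sum.inl_injective

namespace BlockColoring

variable {α : Type*} (p : α → Fin 4)

/-- `X_{i+1}` is `inl '' (p ⁻¹' {i})` and `Y_{i+1}` is `inr '' (p ⁻¹' {i})`; `half` tells the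
blocks `0, 1` apart from the blocks `2, 3`. -/
def half (i : Fin 4) : Fin 2 := ⟨i / 2, by omega⟩

def blueGraph : SimpleGraph (α ⊕ α) := bipartiteGraph fun x y => p x = p y

def redGraph : SimpleGraph (α ⊕ α) := bipartiteGraph fun x y => half (p x) ≠ half (p y)

lemma disjoint_redGraph_blueGraph : Disjoint (redGraph p) (blueGraph p) :=
  disjoint_bipartiteGraph fun _ _ hne heq => hne (congrArg half heq)

variable [Fintype α] {q : ℕ} (hp : ∀ i, {x | p x = i}.ncard = q)
include hp

lemma ncard_neighborSet_sup (v : α ⊕ α) :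
    ((redGraph p ⊔ blueGraph p).neighborSet v).ncard = 3 * q := by
  have hcount : ∀ i : Fin 4,
      (Finset.univ.filter fun j => half i ≠ half j ∨ i = j).card = 3 ∧
      (Finset.univ.filter fun j => half j ≠ half i ∨ j = i).card = 3 := by decide
  rw [redGraph, blueGraph, bipartiteGraph_sup]
  rcases v with x | y
  · rw [neighborSet_bipartiteGraph_inl, ncard_image_of_injective _ Sum.inr_injective,
      ncard_setOf_comp hp (fun j => half (p x) ≠ half j ∨ p x = j), (hcount _).1]
  · rw [neighborSet_bipartiteGraph_inr, ncard_image_of_injective _ Sum.inl_injective,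
      ncard_setOf_comp hp (fun j => half j ≠ half (p y) ∨ j = p y), (hcount _).2]

lemma not_connMatching_blueGraph {k : ℕ} (hk : q < k) : ¬ ConnMatching (blueGraph p) k := by
  intro h
  obtain ⟨c, hc⟩ := h.exists_le_ncard_fiber bipartiteGraph_le_completeBipartiteGraph
    (Sum.elim p p) (by rintro (x | y) (x' | y') h <;> simp_all [blueGraph])
  have hc' : k ≤ {x | p x = c}.ncard := hc
  rw [hp] at hc'
  omega

lemma not_connMatching_redGraph {k : ℕ} (hk : 2 * q < k) : ¬ ConnMatching (redGraph p) k := by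
  have hcount : ∀ c : Fin 2, (Finset.univ.filter fun j => half j = c).card = 2 := by decide
  have hside : ∀ a b : Fin 2, a ≠ b → a = b + 1 := by decide
  intro h
  obtain ⟨c, hc⟩ := h.exists_le_ncard_fiber bipartiteGraph_le_completeBipartiteGraph
    (Sum.elim (half ∘ p) fun y => half (p y) + 1) (by
      rintro (x | y) (x' | y') h
      · exact h.elim
      · exact hside _ _ h
      · exact (hside _ _ h).symm
      · exact h.elim)
  have hc' : k ≤ {x | half (p x) = c}.ncard := hc
  rw [ncard_setOf_comp hp (half · = c), hcount] at hc'
  omega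

end BlockColoring

open BlockColoring

theorem stmt_6 (m n q : ℕ) (hnm : n < m) (hm3n : m < 3 * n) (h4 : m + n - 1 = 4 * q) :
    ∃ G R B : SimpleGraph (Fin (m + n - 1) ⊕ Fin (m + n - 1)),
      -- G is bipartite with the two copies of `Fin (m+n-1)` as parts
      (∀ x y : Fin (m + n - 1), ¬ G.Adj (.inl x) (.inl y) ∧ ¬ G.Adj (.inr x) (.inr y)) ∧
      -- the minimum degree of G is exactly (3/4)(m+n-1) = 3q
      (∀ v, 3 * q ≤ (G.neighborSet v).ncard) ∧ (∃ v, (G.neighborSet v).ncard = 3 * q) ∧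
      -- a red-blue edge-coloring of G
      Disjoint R B ∧ R ⊔ B = G ∧
      -- with no red connected m-matching and no blue connected n-matching
      ¬ ConnMatching R m ∧ ¬ ConnMatching B n := by
  let e : Fin (m + n - 1) ≃ Fin 4 × Fin q := (finCongr h4).trans finProdFinEquiv.symm
  let p x := (e x).1
  have hp : ∀ i, {x | p x = i}.ncard = q := fun i => by
    simpa using ncard_setOf_fst_equiv_eq e i
  have hdeg := ncard_neighborSet_sup p hp
  refine ⟨redGraph p ⊔ blueGraph p, redGraph p, blueGraph p, fun x y => ?_,
    fun v => (hdeg v).ge, ⟨.inl ⟨0, by omega⟩, hdeg _⟩, disjoint_redGraph_blueGraph p, rfl,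
    not_connMatching_redGraph p hp (by omega), not_connMatching_blueGraph p hp (by omega)⟩
  simp [redGraph, blueGraph]
end

section
/- In the coloring of Construction: with X, Y partitioned into four parts of size (m+n-1)/4 each as described, the largest red connected matching has size exactly (m+n-1)/2, and the largest blue connected matching has size exactly (m+n-1)/4. -/
/-
Every red or blue edge joins `X` to `Y`, so a matching inside one component has at most as many
edges as that component has vertices in `X`. A quantity that is constant along the edges of a
colour bounds this: for blue the block index `x / q`, so a blue component meets `X` in one block
(`q` vertices); for red the half `x / q / 2` on the `X` side and the opposite half on the `Y`
side, so a red component meets `X` in one half (`2q` vertices). Conversely, matching `X₁` with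
`Y₁` in blue and `X₁ ∪ X₂` with `Y₃ ∪ Y₄` in red gives connected matchings of these sizes, since
all their `X`-ends are adjacent to one common vertex of `Y`.
-/

open SimpleGraph Set

lemma SimpleGraph.Reachable.apply_eq_of_forall_adj {V ι : Type*} {H : SimpleGraph V} {σ : V → ι}
    (hσ : ∀ a b, H.Adj a b → σ a = σ b) {a b : V} (h : H.Reachable a b) : σ a = σ b := by
  obtain ⟨p⟩ := h
  induction p with
  | nil => rfl
  | cons hab _ ih => exact (hσ _ _ hab).trans ih

lemma SimpleGraph.Subgraph.IsMatching.ncard_edgeSet_le_s7 {V : Type*} [Finite V] {G : SimpleGraph V}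
    {M : G.Subgraph} (hM : M.IsMatching) {S : Set V} (hS : ∀ e ∈ M.edgeSet, ∃ v ∈ S, v ∈ e) :
    M.edgeSet.ncard ≤ S.ncard := by
  have hcover : M.edgeSet ⊆ (fun v : M.verts ↦ (hM.toEdge v : Sym2 V)) '' {v | ↑v ∈ S} := by
    intro e he
    obtain ⟨v, hvS, hve⟩ := hS e he
    obtain ⟨w, rfl⟩ := Sym2.mem_iff_exists.1 hve
    exact ⟨⟨v, M.edge_vert he⟩, hvS, congrArg Subtype.val (hM.toEdge_eq_of_adj he)⟩
  calc M.edgeSet.ncard ≤ _ := ncard_le_ncard hcover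
    _ ≤ {v : M.verts | ↑v ∈ S}.ncard := ncard_image_le
    _ ≤ S.ncard := ncard_le_ncard_of_injOn Subtype.val (fun _ h ↦ h) Subtype.val_injective.injOn

lemma ConnMatching.exists_le_ncard_fiber_s7 {V ι : Type*} [Fintype V] {H : SimpleGraph V} {k : ℕ}
    {S : Set V} (hS : ∀ a b, H.Adj a b → a ∈ S ∨ b ∈ S) {σ : V → ι}
    (hσ : ∀ a b, H.Adj a b → σ a = σ b) (h : ConnMatching H k) :
    ∃ i, k ≤ {v ∈ S | σ v = i}.ncard := by
  obtain ⟨M, hM, rfl, c, hc⟩ := h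
  obtain ⟨v₀, rfl⟩ := c.exists_rep
  have hfiber : ∀ v ∈ M.verts, σ v = σ v₀ := fun v hv ↦
    Reachable.apply_eq_of_forall_adj hσ (ConnectedComponent.exact (hc v hv))
  refine ⟨σ v₀, hM.ncard_edgeSet_le_s7 fun e he ↦ ?_⟩
  induction e using Sym2.ind with
  | _ a b =>
    rcases hS a b (M.adj_sub he) with ha | hb
    · exact ⟨a, ⟨ha, hfiber a (M.edge_vert he)⟩, Sym2.mem_mk_left a b⟩
    · exact ⟨b, ⟨hb, hfiber b (M.edge_vert he.symm)⟩, Sym2.mem_mk_right a b⟩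

def IsBipartiteGraphOf {α β : Type*} (H : SimpleGraph (α ⊕ β)) (r : α → β → Prop) : Prop :=
  ∀ a b, H.Adj a b ↔ ∃ x y, ((a = .inl x ∧ b = .inr y) ∨ (a = .inr y ∧ b = .inl x)) ∧ r x y

section Bipartite

variable {α β : Type*} [Fintype α] [Fintype β] {r : α → β → Prop} {H : SimpleGraph (α ⊕ β)}

lemma ConnMatching.exists_le_ncard_fiber_left {ι : Type*} (hH : IsBipartiteGraphOf H r)
    {σl : α → ι} {σr : β → ι} (hσ : ∀ x y, r x y → σl x = σr y) {k : ℕ}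
    (h : ConnMatching H k) : ∃ i, k ≤ {x | σl x = i}.ncard := by
  have hS : ∀ a b, H.Adj a b → a ∈ range Sum.inl ∨ b ∈ range Sum.inl := by
    intro a b hab
    obtain ⟨x, y, ⟨rfl, rfl⟩ | ⟨rfl, rfl⟩, -⟩ := (hH a b).1 hab
    exacts [.inl ⟨x, rfl⟩, .inr ⟨x, rfl⟩]
  have hinv : ∀ a b, H.Adj a b → Sum.elim σl σr a = Sum.elim σl σr b := by
    intro a b hab
    obtain ⟨x, y, ⟨rfl, rfl⟩ | ⟨rfl, rfl⟩, hxy⟩ := (hH a b).1 hab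
    exacts [hσ x y hxy, (hσ x y hxy).symm]
  obtain ⟨i, hi⟩ := h.exists_le_ncard_fiber_s7 hS hinv
  have hfiber : {v ∈ range Sum.inl | Sum.elim σl σr v = i} = Sum.inl '' {x | σl x = i} := by
    ext (x | y) <;> simp
  rw [hfiber, ncard_image_of_injective _ Sum.inl_injective] at hi
  exact ⟨i, hi⟩

lemma connMatching_of_injective (hH : IsBipartiteGraphOf H r)
    {ι : Type*} [Finite ι] {f : ι → α} {g : ι → β} (hf : f.Injective) (hg : g.Injective)
    (hr : ∀ i, r (f i) (g i)) (y₀ : β) (hy₀ : ∀ i, r (f i) y₀) :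
    ConnMatching H (Nat.card ι) := by
  have hadj : ∀ x y, r x y → H.Adj (.inl x) (.inr y) :=
    fun x y hxy ↦ (hH _ _).2 ⟨x, y, .inl ⟨rfl, rfl⟩, hxy⟩
  refine ⟨⨆ i, H.subgraphOfAdj (hadj _ _ (hr i)), ?_, ?_, H.connectedComponentMk (.inr y₀), ?_⟩
  · refine Subgraph.IsMatching.iSup (fun i ↦ .subgraphOfAdj _) fun i j hij ↦ ?_
    simp [(Subgraph.IsMatching.subgraphOfAdj _).support_eq_verts, (hf.ne hij).symm,
      (hg.ne hij).symm]
  · rw [Subgraph.edgeSet_iSup]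
    simp only [edgeSet_subgraphOfAdj, iUnion_singleton_eq_range]
    refine ncard_range_of_injective fun i j hij ↦ hf ?_
    simp only [Sym2.eq_iff, Sum.inl.injEq, Sum.inr.injEq, reduceCtorEq, and_false, or_false] at hij
    exact hij.1
  · simp only [Subgraph.verts_iSup, subgraphOfAdj_verts, mem_iUnion, mem_insert_iff,
      mem_singleton_iff]
    rintro v ⟨i, rfl | rfl⟩
    · exact ConnectedComponent.sound (hadj _ _ (hy₀ i)).reachable
    · exact ConnectedComponent.sound ((hadj _ _ (hr i)).symm.reachable.trans
        (hadj _ _ (hy₀ i)).reachable)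

end Bipartite

lemma Fin.ncard_setOf_val_div_eq_le {N d : ℕ} (hd : 0 < d) (i : ℕ) :
    {x : Fin N | x.val / d = i}.ncard ≤ d := by
  calc _ ≤ (Finset.range d : Set ℕ).ncard := by
        refine ncard_le_ncard_of_injOn (fun x ↦ x.val % d) (fun x _ ↦ ?_) (fun x hx y hy hxy ↦ ?_)
          (Finset.finite_toSet _)
        · simpa using Nat.mod_lt _ hd
        · simp only [mem_ofPred_eq] at hx hy hxy
          rw [Fin.ext_iff, ← Nat.div_add_mod x d, ← Nat.div_add_mod y d, hx, hy, hxy]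
    _ = d := by simp

section Construction

variable {q : ℕ}

lemma connMatching_red (hq : 0 < q) {R : SimpleGraph (Fin (4 * q) ⊕ Fin (4 * q))}
    (hR : IsBipartiteGraphOf R fun x y : Fin (4 * q) ↦
      (x.val / q < 2 ∧ 2 ≤ y.val / q) ∨ (2 ≤ x.val / q ∧ y.val / q < 2)) :
    ConnMatching R (2 * q) := by
  have hred : ∀ x y : Fin (4 * q), x.val < 2 * q → 2 * q ≤ y.val →
      (x.val / q < 2 ∧ 2 ≤ y.val / q) ∨ (2 ≤ x.val / q ∧ y.val / q < 2) := fun x y hx hy ↦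
    .inl ⟨(Nat.div_lt_iff_lt_mul hq).2 (by omega), (Nat.le_div_iff_mul_le hq).2 (by omega)⟩
  simpa using connMatching_of_injective hR
    (f := fun i : Fin (2 * q) ↦ ⟨i, by omega⟩) (g := fun i ↦ ⟨i + 2 * q, by omega⟩)
    (fun i j hij ↦ by simpa [Fin.ext_iff] using hij) (fun i j hij ↦ by simpa [Fin.ext_iff] using hij)
    (fun i ↦ hred _ _ i.isLt (by simp)) ⟨2 * q, by omega⟩ (fun i ↦ hred _ _ i.isLt le_rfl)

lemma not_connMatching_red (hq : 0 < q) {R : SimpleGraph (Fin (4 * q) ⊕ Fin (4 * q))}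
    (hR : IsBipartiteGraphOf R fun x y : Fin (4 * q) ↦
      (x.val / q < 2 ∧ 2 ≤ y.val / q) ∨ (2 ≤ x.val / q ∧ y.val / q < 2)) :
    ¬ ConnMatching R (2 * q + 1) := by
  intro h
  have hblock : ∀ x : Fin (4 * q), x.val / q < 4 := fun x ↦
    (Nat.div_lt_iff_lt_mul hq).2 (by omega)
  obtain ⟨i, hi⟩ := h.exists_le_ncard_fiber_left hR (σl := fun x ↦ x.val / q / 2)
    (σr := fun y ↦ 1 - y.val / q / 2) fun x y hxy ↦ by
      have := hblock x; have := hblock y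
      generalize x.val / q = a, y.val / q = b at *
      omega
  have := Fin.ncard_setOf_val_div_eq_le (N := 4 * q) (Nat.mul_pos hq two_pos) i
  simp only [← Nat.div_div_eq_div_mul] at this
  omega

lemma connMatching_blue (hq : 0 < q) {B : SimpleGraph (Fin (4 * q) ⊕ Fin (4 * q))}
    (hB : IsBipartiteGraphOf B fun x y : Fin (4 * q) ↦ x.val / q = y.val / q) :
    ConnMatching B q := by
  simpa using connMatching_of_injective hB
    (f := fun i : Fin q ↦ ⟨i, by omega⟩) (g := fun i ↦ ⟨i, by omega⟩)
    (fun i j hij ↦ by simpa [Fin.ext_iff] using hij) (fun i j hij ↦ by simpa [Fin.ext_iff] using hij)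
    (fun _ ↦ rfl) ⟨0, by omega⟩ (fun i ↦ by simp [Nat.div_eq_of_lt i.isLt])

lemma not_connMatching_blue (hq : 0 < q) {B : SimpleGraph (Fin (4 * q) ⊕ Fin (4 * q))}
    (hB : IsBipartiteGraphOf B fun x y : Fin (4 * q) ↦ x.val / q = y.val / q) :
    ¬ ConnMatching B (q + 1) := by
  intro h
  obtain ⟨i, hi⟩ := h.exists_le_ncard_fiber_left hB (σl := fun x ↦ x.val / q)
    (σr := fun y ↦ y.val / q) fun _ _ ↦ id
  have := Fin.ncard_setOf_val_div_eq_le (N := 4 * q) hq i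
  omega

end Construction

theorem stmt_7_general (m n q : ℕ) (hq : 0 < q) (h4 : m + n - 1 = 4 * q)
    (R B : SimpleGraph (Fin (m + n - 1) ⊕ Fin (m + n - 1)))
    (hR : ∀ a b, R.Adj a b ↔ ∃ x y : Fin (m + n - 1),
      ((a = .inl x ∧ b = .inr y) ∨ (a = .inr y ∧ b = .inl x)) ∧
      ((x.val / q < 2 ∧ 2 ≤ y.val / q) ∨ (2 ≤ x.val / q ∧ y.val / q < 2)))
    (hB : ∀ a b, B.Adj a b ↔ ∃ x y : Fin (m + n - 1),
      ((a = .inl x ∧ b = .inr y) ∨ (a = .inr y ∧ b = .inl x)) ∧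
      x.val / q = y.val / q) :
    ConnMatching R (2 * q) ∧ ¬ ConnMatching R (2 * q + 1) ∧
    ConnMatching B q ∧ ¬ ConnMatching B (q + 1) := by
  generalize m + n - 1 = N at *
  subst h4
  exact ⟨connMatching_red hq hR, not_connMatching_red hq hR, connMatching_blue hq hB,
    not_connMatching_blue hq hB⟩

/-- In the coloring of Construction 1 (blocks of size `q = (m+n-1)/4`; a vertex
`x` lies in block `x / q ∈ {0,1,2,3}`; red edges join `X₁∪X₂` to `Y₃∪Y₄` and
`X₃∪X₄` to `Y₁∪Y₂`, blue edges join `Xᵢ` to `Yᵢ`), the largest red connected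
matching has size exactly `(m+n-1)/2 = 2q` and the largest blue connected
matching has size exactly `(m+n-1)/4 = q`. -/
theorem stmt_7 (m n q : ℕ) (hq : 0 < q) (hnm : n < m) (hm3n : m < 3 * n)
    (h4 : m + n - 1 = 4 * q)
    (R B : SimpleGraph (Fin (m + n - 1) ⊕ Fin (m + n - 1)))
    (hR : ∀ a b, R.Adj a b ↔ ∃ x y : Fin (m + n - 1),
      ((a = .inl x ∧ b = .inr y) ∨ (a = .inr y ∧ b = .inl x)) ∧
      ((x.val / q < 2 ∧ 2 ≤ y.val / q) ∨ (2 ≤ x.val / q ∧ y.val / q < 2)))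
    (hB : ∀ a b, B.Adj a b ↔ ∃ x y : Fin (m + n - 1),
      ((a = .inl x ∧ b = .inr y) ∨ (a = .inr y ∧ b = .inl x)) ∧
      x.val / q = y.val / q) :
    ConnMatching R (2 * q) ∧ ¬ ConnMatching R (2 * q + 1) ∧
    ConnMatching B q ∧ ¬ ConnMatching B (q + 1) :=
  stmt_7_general m n q hq h4 R B hR hB
end

section
/- Let G be a balanced bipartite graph with parts of size m+n-1 each (m > n ≥ 1), δ(G) > (3/4)(m+n-1), with a red-blue edge-coloring having no blue connected matching of size n. Suppose B is a largest blue component satisfying |V(B) ∩ V_i| ≥ n for i = 1, 2, and let S be a minimum vertex cover of B. Then all vertices of V(B) \ S lie in a single connected component of the red subgraph. -/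
/-!
A minimum vertex cover `S` of `B` has fewer than `n` vertices: otherwise Hall's theorem with
deficiency, applied to the side `V₁ ∩ B`, produces a blue connected `n`-matching (König).
Every edge joining a vertex of `B - S` to a vertex outside `S` is therefore red. Two vertices of
`B - S` on the same side have more than `p / 2 > |S|` common neighbours (`p = m + n - 1`), one of
them outside `S`, so they are joined by a red path of length two.

Suppose the red components `D₁` of `x₀ ∈ V₁ ∩ (B - S)` and `D₂` of `y₀ ∈ V₂ ∩ (B - S)` differ.
Then `y₀` has no neighbour in `V₁ ∩ (B - S)` and `x₀` none in `V₂ ∩ (B - S)`, so `B - S` has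
fewer than `p / 4` vertices on each side. On the other hand `P = (V₂ ∩ D₁) - S` and
`Q = (V₁ ∩ D₂) - S` contain the neighbourhoods of `x₀` and `y₀` outside `S`, and every edge
between `P` and `Q` is blue. Degree counting gives any two vertices of `P` a common neighbour
in `Q` and vice versa, so `P ∪ Q` lies in a single blue component, with at least `n` vertices
on each side and more vertices than `B`.
-/

open SimpleGraph Set

open Finset Function

theorem Finset.exists_card_eq_injective_of_card_le_card_biUnion_add {ι α : Type*} [Fintype ι]
    [DecidableEq α] (t : ι → Finset α) (d : ℕ) (h : ∀ s : Finset ι, #s ≤ #(s.biUnion t) + d) :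
    ∃ s : Finset ι, #s = Fintype.card ι - d ∧ ∃ f : s → α, Injective f ∧ ∀ i : s, f i ∈ t i := by
  classical
  -- Hall's theorem for the sets `t i` enlarged by `d` common dummy elements
  obtain ⟨g, hg, hgt⟩ := (all_card_le_biUnion_card_iff_exists_injective
    fun i ↦ (t i).disjSum (univ : Finset (Fin d))).1 fun s ↦ by
      rcases s.eq_empty_or_nonempty with rfl | ⟨i, hi⟩
      · simp
      calc #s ≤ #((s.biUnion t).disjSum (univ : Finset (Fin d))) := by simpa using h s
        _ ≤ _ := by
          refine card_le_card fun x hx ↦ ?_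
          rcases x with a | b
          · simpa using hx
          · simpa using ⟨i, hi⟩
  have hright : #(univ.filter fun i ↦ ¬(g i).isLeft) ≤ d := by
    simpa using card_le_card_of_injOn g (t := univ.map Embedding.inr) (fun i hi ↦ by
      cases hgi : g i <;> simp_all) hg.injOn
  have hsplit := card_filter_add_card_filter_not (s := univ) fun i ↦ (g i).isLeft
  rw [card_univ] at hsplit
  obtain ⟨s, hsleft, hs⟩ :=
    exists_subset_card_eq (s := univ.filter fun i ↦ (g i).isLeft) (n := Fintype.card ι - d)
      (by omega)
  have hleft (i : s) : (g i).isLeft := (mem_filter.1 (hsleft i.2)).2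
  refine ⟨s, hs, fun i ↦ (g i).getLeft (hleft i), fun i j hij ↦ Subtype.ext (hg ?_), fun i ↦ ?_⟩
  · simpa using congrArg (Sum.inl (β := Fin d)) hij
  · have := hgt i
    rwa [← Sum.inl_getLeft (g i) (hleft i), inl_mem_disjSum] at this

namespace Set

variable {α : Type*} [Finite α] {A B C S W s t u : Set α}

theorem ncard_le_ncard_add_ncard_of_subset_union (h : s ⊆ t ∪ u) : s.ncard ≤ t.ncard + u.ncard :=
  (ncard_le_ncard h).trans (ncard_union_le t u)

theorem ncard_inter_le_ncard_inter_sdiff_add (W T S : Set α) :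
    (W ∩ T).ncard ≤ (W ∩ (T \ S)).ncard + (W ∩ S).ncard :=
  ncard_le_ncard_add_ncard_of_subset_union fun v hv ↦ by
    by_cases hvS : v ∈ S
    exacts [.inr ⟨hv.1, hvS⟩, .inl ⟨hv.1, hv.2, hvS⟩]

theorem ncard_le_ncard_inter_sdiff_add_ncard_inter_sdiff_add (h : s ∪ t = univ) (T S : Set α) :
    T.ncard ≤ (s ∩ (T \ S)).ncard + (t ∩ (T \ S)).ncard + S.ncard := by
  refine (ncard_le_ncard_add_ncard_of_subset_union (t := s ∩ (T \ S) ∪ t ∩ (T \ S))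
    fun v hv ↦ ?_).trans (Nat.add_le_add_right (ncard_union_le _ _) _)
  by_cases hvS : v ∈ S
  · exact .inr hvS
  rcases (h ▸ mem_univ v : v ∈ s ∪ t) with hvs | hvt
  exacts [.inl (.inl ⟨hvs, hv, hvS⟩), .inl (.inr ⟨hvt, hv, hvS⟩)]

theorem ncard_inter_add_ncard_inter_le (h : Disjoint s t) (u : Set α) :
    (s ∩ u).ncard + (t ∩ u).ncard ≤ u.ncard := by
  rw [← ncard_union_eq (h.mono inter_subset_left inter_subset_left)]
  exact ncard_le_ncard (union_subset inter_subset_right inter_subset_right)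

theorem ncard_add_ncard_le_ncard_inter_add_ncard (hA : A ⊆ W) (hB : B ⊆ W) :
    A.ncard + B.ncard ≤ (A ∩ B).ncard + W.ncard := by
  rw [← ncard_inter_add_ncard_union A B]
  exact Nat.add_le_add_left (ncard_le_ncard (union_subset hA hB)) _

theorem exists_mem_inter_notMem_of_ncard_add_lt (hA : A ⊆ W) (hB : B ⊆ W)
    (h : W.ncard + S.ncard < A.ncard + B.ncard) : ∃ x ∈ A ∩ B, x ∉ S := by
  have := ncard_add_ncard_le_ncard_inter_add_ncard hA hB
  exact exists_mem_notMem_of_ncard_lt_ncard (by omega)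

theorem inter_inter_nonempty_of_two_mul_ncard_lt (hA : A ⊆ W) (hB : B ⊆ W) (hC : C ⊆ W)
    (h : 2 * W.ncard < A.ncard + B.ncard + C.ncard) : (A ∩ B ∩ C).Nonempty := by
  have hAC := ncard_add_ncard_le_ncard_inter_add_ncard hA hC
  have hACB := ncard_add_ncard_le_ncard_inter_add_ncard (A := A ∩ C) (inter_subset_left.trans hA) hB
  rw [inter_right_comm] at hACB
  exact nonempty_of_ncard_ne_zero (by omega)

end Set

namespace SimpleGraph

variable {V : Type*} {H : SimpleGraph V}

theorem Subgraph.exists_isMatching_of_injective {ι : Type*} {a b : ι → V}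
    (ha : a.Injective) (hb : b.Injective) (hab : ∀ i j, a i ≠ b j) (hadj : ∀ i, H.Adj (a i) (b i)) :
    ∃ M : H.Subgraph,
      M.IsMatching ∧ M.verts = range a ∪ range b ∧ M.edgeSet.ncard = Nat.card ι := by
  refine ⟨⨆ i, H.subgraphOfAdj (hadj i), IsMatching.iSup (fun i ↦ .subgraphOfAdj _) ?_, ?_, ?_⟩
  · intro i j hij
    simp only [support_subgraphOfAdj, disjoint_insert_left, disjoint_insert_right,
      Set.disjoint_singleton, Set.mem_insert_iff, Set.mem_singleton_iff, not_or]
    exact ⟨⟨ha.ne hij, hab i j⟩, hab j i, hb.ne hij⟩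
  · ext v
    simp [Subgraph.verts_iSup, exists_or, eq_comm]
  · have hedges : (⨆ i, H.subgraphOfAdj (hadj i)).edgeSet = range fun i ↦ s(a i, b i) := by
      ext e
      simp [Subgraph.edgeSet_iSup]
    rw [hedges, ncard_range_of_injective]
    intro i j hij
    rcases Sym2.eq_iff.1 hij with ⟨hij, -⟩ | ⟨hij, -⟩
    · exact ha hij
    · exact absurd hij (hab i j)

def ConnectedComponent.IsVertexCover (c : H.ConnectedComponent) (S : Set V) : Prop :=
  S ⊆ c.supp ∧ ∀ x y, H.Adj x y → x ∈ c.supp → x ∈ S ∨ y ∈ S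

variable {V₁ V₂ : Set V}

theorem ConnectedComponent.isVertexCover_sdiff_union_biUnion [Fintype V] [DecidableEq V]
    [DecidableRel H.Adj] (hH : H.IsBipartiteWith V₁ V₂) (c : H.ConnectedComponent)
    {L A : Finset V} (hL : (L : Set V) = V₁ ∩ c.supp) (hA : A ⊆ L) :
    c.IsVertexCover ↑(L \ A ∪ A.biUnion fun v ↦ H.neighborFinset v) := by
  have hLc : ∀ x ∈ L, x ∈ c.supp := fun x hx ↦ (hL ▸ mem_coe.2 hx : x ∈ V₁ ∩ c.supp).2
  refine ⟨fun x hx ↦ ?_, fun x y hxy hx ↦ ?_⟩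
  · simp only [coe_union, coe_sdiff, coe_biUnion, Set.mem_union, Set.mem_sdiff, mem_iUnion,
      mem_coe, exists_prop, mem_neighborFinset] at hx
    rcases hx with ⟨hx, -⟩ | ⟨u, hu, hux⟩
    · exact hLc x hx
    · exact c.mem_supp_of_adj_mem_supp (hLc u (hA hu)) hux
  have hy : y ∈ c.supp := c.mem_supp_of_adj_mem_supp hx hxy
  have hmemL : ∀ z, z ∈ V₁ → z ∈ c.supp → z ∈ L := fun z hz hzc ↦ by
    rw [← mem_coe, hL]; exact ⟨hz, hzc⟩
  rcases hH.mem_of_adj hxy with ⟨hx₁, -⟩ | ⟨-, hy₁⟩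
  · by_cases hxA : x ∈ A
    · exact .inr (by simpa using .inr ⟨x, hxA, hxy⟩)
    · exact .inl (by simp [hmemL x hx₁ hx, hxA])
  · by_cases hyA : y ∈ A
    · exact .inl (by simpa using .inr ⟨y, hyA, hxy.symm⟩)
    · exact .inr (by simp [hmemL y hy₁ hy, hyA])

theorem connMatching_of_forall_le_ncard_isVertexCover [Fintype V] (hH : H.IsBipartiteWith V₁ V₂)
    (c : H.ConnectedComponent) {n : ℕ} (h : ∀ S, c.IsVertexCover S → n ≤ S.ncard) :
    ConnMatching H n := by
  classical
  obtain ⟨L, hL⟩ := (V₁ ∩ c.supp).toFinite.exists_finset_coe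
  have hcover {A : Finset V} (hA : A ⊆ L) := c.isVertexCover_sdiff_union_biUnion hH hL hA
  have hLn : n ≤ #L := by simpa using h _ (hcover (Finset.empty_subset L))
  -- König's bound: for `A ⊆ L`, the cover `(L \ A) ∪ N(A)` has at least `n` vertices
  have hdef (s : Finset L) : #s ≤ #(s.biUnion fun u ↦ H.neighborFinset u) + (#L - n) := by
    have hA : s.image Subtype.val ⊆ L := fun x hx ↦ by
      obtain ⟨u, -, rfl⟩ := Finset.mem_image.1 hx
      exact u.2
    have := ((h _ (hcover hA)).trans_eq (ncard_coe_finset _)).trans (card_union_le _ _)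
    rw [card_sdiff_of_subset hA, Finset.card_image_of_injective _ Subtype.val_injective,
      image_biUnion] at this
    have := (card_le_univ s).trans_eq (Fintype.card_coe L)
    omega
  obtain ⟨s, hs, f, hf, hfN⟩ := exists_card_eq_injective_of_card_le_card_biUnion_add _ _ hdef
  rw [Fintype.card_coe, Nat.sub_sub_self hLn] at hs
  have hsL (i : s) : (i : L).1 ∈ V₁ ∩ c.supp := hL ▸ mem_coe.2 (i : L).2
  have hadj (i : s) : H.Adj (i : L).1 (f i) := by simpa using hfN i
  obtain ⟨M, hM, hverts, hcard⟩ := Subgraph.exists_isMatching_of_injective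
    (a := fun i : s ↦ (i : L).1) (b := f) (Subtype.val_injective.comp Subtype.val_injective) hf
    (fun i j hij ↦ hH.disjoint.ne_of_mem (hsL i).1 (hH.mem_of_mem_adj (hsL j).1 (hadj j)) hij)
    hadj
  refine ⟨M, hM, by simp [hcard, hs], c, fun v hv ↦ ?_⟩
  rw [hverts] at hv
  rcases hv with ⟨i, rfl⟩ | ⟨i, rfl⟩
  · exact (hsL i).2
  · exact c.mem_supp_of_adj_mem_supp (hsL i).2 (hadj i)

section RedBlue

variable {G R B : SimpleGraph V} {c : B.ConnectedComponent} {S : Set V}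

theorem ConnectedComponent.IsVertexCover.adj_of_adj_of_le_sup (hS : c.IsVertexCover S)
    (hG : G ≤ R ⊔ B) {u w : V} (hu : u ∈ c.supp \ S) (hw : w ∉ S) (h : G.Adj u w) : R.Adj u w :=
  (hG h).resolve_right fun hB ↦ (hS.2 u w hB hu.1).elim hu.2 hw

theorem subset_supp_connectedComponentMk {P Q : Set V} {a₀ : V} (ha₀ : a₀ ∈ P)
    (hP : ∀ a ∈ P, ∀ a' ∈ P, ∃ b, H.Adj a b ∧ H.Adj a' b) (hQ : ∀ b ∈ Q, ∃ a ∈ P, H.Adj b a) :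
    P ∪ Q ⊆ (H.connectedComponentMk a₀).supp := by
  have hPreach : ∀ a ∈ P, H.Reachable a a₀ := fun a ha ↦
    let ⟨_, hab, ha₀b⟩ := hP a ha a₀ ha₀
    hab.reachable.trans ha₀b.reachable.symm
  rintro v (hv | hv)
  · exact ConnectedComponent.eq.2 (hPreach v hv)
  · obtain ⟨a, ha, hva⟩ := hQ v hv
    exact ConnectedComponent.eq.2 (hva.reachable.trans (hPreach a ha))

variable [Finite V]

theorem ConnectedComponent.IsVertexCover.reachable_of_ncard_add_lt (hS : c.IsVertexCover S)
    (hG : G ≤ R ⊔ B) {u v : V} (hu : u ∈ c.supp \ S) (hv : v ∈ c.supp \ S) {W : Set V}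
    (huW : G.neighborSet u ⊆ W) (hvW : G.neighborSet v ⊆ W)
    (h : W.ncard + S.ncard < (G.neighborSet u).ncard + (G.neighborSet v).ncard) :
    R.Reachable u v := by
  obtain ⟨w, ⟨hwu, hwv⟩, hwS⟩ := exists_mem_inter_notMem_of_ncard_add_lt huW hvW h
  exact (hS.adj_of_adj_of_le_sup hG hu hwS hwu).reachable.trans
    (hS.adj_of_adj_of_le_sup hG hv hwS hwv).reachable.symm

theorem ConnectedComponent.IsVertexCover.ncard_neighborSet_le (hS : c.IsVertexCover S)
    (hG : G ≤ R ⊔ B) {x : V} (hx : x ∈ c.supp \ S) {W : Set V} (hxW : G.neighborSet x ⊆ W) :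
    (G.neighborSet x).ncard ≤ ((W \ S) ∩ {w | R.Reachable x w}).ncard + (W ∩ S).ncard := by
  refine ncard_le_ncard_add_ncard_of_subset_union fun w hw ↦ ?_
  by_cases hwS : w ∈ S
  · exact .inr ⟨hxW hw, hwS⟩
  · exact .inl ⟨⟨hxW hw, hwS⟩, (hS.adj_of_adj_of_le_sup hG hx hwS hw).reachable⟩

theorem ConnectedComponent.IsVertexCover.ncard_add_ncard_neighborSet_le (hS : c.IsVertexCover S)
    (hG : G ≤ R ⊔ B) {x : V} (hx : x ∈ c.supp \ S) {Y W : Set V} (hxW : G.neighborSet x ⊆ W)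
    (hYW : Y ⊆ W) (hY : ∀ y ∈ Y, y ∉ S ∧ ¬R.Reachable x y) :
    Y.ncard + (G.neighborSet x).ncard ≤ W.ncard := by
  have hdisj : Disjoint Y (G.neighborSet x) := Set.disjoint_left.2 fun y hy hxy ↦
    (hY y hy).2 (hS.adj_of_adj_of_le_sup hG hx (hY y hy).1 hxy).reachable
  rw [← ncard_union_eq hdisj]
  exact ncard_le_ncard (union_subset hYW hxW)

theorem exists_common_adj_of_ncard {P Q W : Set V} (hPW : ∀ a ∈ P, G.neighborSet a ⊆ W)
    (hQW : Q ⊆ W) (hGH : ∀ a ∈ P, ∀ b ∈ Q, G.Adj a b → H.Adj a b)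
    (h : ∀ a ∈ P, ∀ a' ∈ P,
      2 * W.ncard < (G.neighborSet a).ncard + (G.neighborSet a').ncard + Q.ncard) :
    ∀ a ∈ P, ∀ a' ∈ P, ∃ b ∈ Q, H.Adj a b ∧ H.Adj a' b := fun a ha a' ha' ↦
  let ⟨b, ⟨hab, ha'b⟩, hb⟩ :=
    inter_inter_nonempty_of_two_mul_ncard_lt (hPW a ha) (hPW a' ha') hQW (h a ha a' ha')
  ⟨b, hb, hGH a ha b hb hab, hGH a' ha' b hb ha'b⟩

theorem exists_connectedComponent_superset_of_ncard (hG : G.IsBipartiteWith V₁ V₂) {P Q : Set V}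
    (hP : P ⊆ V₂) (hQ : Q ⊆ V₁) (hPne : P.Nonempty)
    (hPQ : ∀ a ∈ P, ∀ b ∈ Q, G.Adj a b → H.Adj a b)
    (hPdeg : ∀ a ∈ P, ∀ a' ∈ P,
      2 * V₁.ncard < (G.neighborSet a).ncard + (G.neighborSet a').ncard + Q.ncard)
    (hQdeg : ∀ b ∈ Q, ∀ b' ∈ Q,
      2 * V₂.ncard < (G.neighborSet b).ncard + (G.neighborSet b').ncard + P.ncard) :
    ∃ d : H.ConnectedComponent, P ∪ Q ⊆ d.supp := by
  obtain ⟨a₀, ha₀⟩ := hPne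
  have hPQ' : ∀ b ∈ Q, ∀ a ∈ P, G.Adj b a → H.Adj b a :=
    fun b hb a ha h ↦ (hPQ a ha b hb h.symm).symm
  refine ⟨_, subset_supp_connectedComponentMk ha₀ (fun a ha a' ha' ↦ ?_) fun b hb ↦ ?_⟩
  · obtain ⟨b, -, hab⟩ := exists_common_adj_of_ncard
      (fun a ha ↦ isBipartiteWith_neighborSet_subset hG.symm (hP ha)) hQ hPQ hPdeg a ha a' ha'
    exact ⟨b, hab⟩
  · obtain ⟨a, ha, hba, -⟩ := exists_common_adj_of_ncard
      (fun b hb ↦ isBipartiteWith_neighborSet_subset hG (hQ hb)) hP hPQ' hQdeg b hb b hb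
    exact ⟨a, ha, hba⟩

variable {n p : ℕ}

theorem ConnectedComponent.IsVertexCover.reachable_of_forall_ncard_supp_le
    (hS : c.IsVertexCover S) (hGRB : G ≤ R ⊔ B) (hG : G.IsBipartiteWith V₁ V₂)
    (hcover : V₁ ∪ V₂ = univ)
    (hV₁ : V₁.ncard = p) (hV₂ : V₂.ncard = p) (hδ : ∀ v, 3 * p < 4 * (G.neighborSet v).ncard)
    (hpn : 2 * n ≤ p) (hSn : S.ncard < n)
    (hc₁ : n ≤ (V₁ ∩ c.supp).ncard) (hc₂ : n ≤ (V₂ ∩ c.supp).ncard)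
    (hmax : ∀ d : B.ConnectedComponent, n ≤ (V₁ ∩ d.supp).ncard → n ≤ (V₂ ∩ d.supp).ncard →
      d.supp.ncard ≤ c.supp.ncard)
    {x₀ y₀ : V} (hx₀ : x₀ ∈ V₁ ∩ (c.supp \ S)) (hy₀ : y₀ ∈ V₂ ∩ (c.supp \ S))
    (hX : ∀ x ∈ V₁ ∩ (c.supp \ S), R.Reachable x₀ x)
    (hY : ∀ y ∈ V₂ ∩ (c.supp \ S), R.Reachable y₀ y) :
    R.Reachable x₀ y₀ := by
  by_contra hxy
  set P := (V₂ \ S) ∩ {w | R.Reachable x₀ w}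
  set Q := (V₁ \ S) ∩ {w | R.Reachable y₀ w}
  have hNx₀ := isBipartiteWith_neighborSet_subset hG hx₀.1
  have hNy₀ := isBipartiteWith_neighborSet_subset hG.symm hy₀.1
  have hXdeg := hS.ncard_add_ncard_neighborSet_le (Y := V₁ ∩ (c.supp \ S)) hGRB hy₀.2 hNy₀
    (fun x hx ↦ hx.1) fun x hx ↦ ⟨hx.2.2, fun h ↦ hxy ((hX x hx).trans h.symm)⟩
  have hYdeg := hS.ncard_add_ncard_neighborSet_le (Y := V₂ ∩ (c.supp \ S)) hGRB hx₀.2 hNx₀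
    (fun y hy ↦ hy.1) fun y hy ↦ ⟨hy.2.2, fun h ↦ hxy (h.trans (hY y hy).symm)⟩
  have hPdeg : (G.neighborSet x₀).ncard ≤ P.ncard + (V₂ ∩ S).ncard :=
    hS.ncard_neighborSet_le hGRB hx₀.2 hNx₀
  have hQdeg : (G.neighborSet y₀).ncard ≤ Q.ncard + (V₁ ∩ S).ncard :=
    hS.ncard_neighborSet_le hGRB hy₀.2 hNy₀
  have hδx₀ := hδ x₀
  have hδy₀ := hδ y₀
  have hXn := ncard_inter_le_ncard_inter_sdiff_add V₁ c.supp S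
  have hYn := ncard_inter_le_ncard_inter_sdiff_add V₂ c.supp S
  have hS₁₂ := ncard_inter_add_ncard_inter_le hG.disjoint S
  have hcXY := ncard_le_ncard_inter_sdiff_add_ncard_inter_sdiff_add hcover c.supp S
  have hPQ : ∀ a ∈ P, ∀ b ∈ Q, G.Adj a b → B.Adj a b := fun a ha b hb h ↦
    (hGRB h).resolve_left fun hR ↦ hxy (ha.2.trans (hR.reachable.trans hb.2.symm))
  -- `|V₁ ∩ S| < |V₂ ∩ (c \ S)| < p / 4`, so `Q` (and likewise `P`) has more than `p / 2` vertices
  obtain ⟨d, hd⟩ := exists_connectedComponent_superset_of_ncard hG (P := P) (Q := Q)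
    (fun a ha ↦ ha.1.1) (fun b hb ↦ hb.1.1) (nonempty_of_ncard_ne_zero (by omega)) hPQ
    (fun a _ a' _ ↦ by have := hδ a; have := hδ a'; omega)
    (fun b _ b' _ ↦ by have := hδ b; have := hδ b'; omega)
  have hPQd : P.ncard + Q.ncard ≤ d.supp.ncard := by
    rw [← ncard_union_eq (hG.disjoint.symm.mono (fun a ha ↦ ha.1.1) fun b hb ↦ hb.1.1)]
    exact ncard_le_ncard hd
  have := hmax d ((by omega : n ≤ Q.ncard).trans (ncard_le_ncard fun b hb ↦ ⟨hb.1.1, hd (.inr hb)⟩))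
    ((by omega : n ≤ P.ncard).trans (ncard_le_ncard fun a ha ↦ ⟨ha.1.1, hd (.inl ha)⟩))
  omega

end RedBlue

end SimpleGraph

theorem stmt_10_general {V : Type*} [Fintype V] [DecidableEq V] (m n : ℕ) (hmn : n < m)
    (G : SimpleGraph V) (V1 V2 : Finset V)
    (hdisj : Disjoint V1 V2) (hcover : V1 ∪ V2 = Finset.univ)
    (hV1 : V1.card = m + n - 1) (hV2 : V2.card = m + n - 1)
    (hbip : ∀ x y, G.Adj x y → (x ∈ V1 ∧ y ∈ V2) ∨ (x ∈ V2 ∧ y ∈ V1))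
    (hδ : ∀ v, 3 * (m + n - 1) < 4 * (G.neighborSet v).ncard)
    (R B : SimpleGraph V) (hcolor : R ⊔ B = G)
    (hnoblue : ¬ ConnMatching B n)
    (c : B.ConnectedComponent)
    (hc1 : n ≤ ((V1 : Set V) ∩ c.supp).ncard) (hc2 : n ≤ ((V2 : Set V) ∩ c.supp).ncard)
    (hmax : ∀ c' : B.ConnectedComponent,
      n ≤ ((V1 : Set V) ∩ c'.supp).ncard → n ≤ ((V2 : Set V) ∩ c'.supp).ncard →
      c'.supp.ncard ≤ c.supp.ncard)
    (S : Set V) (hSsub : S ⊆ c.supp)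
    (hScov : ∀ x y, B.Adj x y → x ∈ c.supp → x ∈ S ∨ y ∈ S)
    (hSmin : ∀ S' : Set V, S' ⊆ c.supp →
      (∀ x y, B.Adj x y → x ∈ c.supp → x ∈ S' ∨ y ∈ S') → S.ncard ≤ S'.ncard) :
    ∃ d : R.ConnectedComponent, ∀ v ∈ c.supp \ S, v ∈ d.supp := by
  have hG : G.IsBipartiteWith V1 V2 := ⟨Finset.disjoint_coe.2 hdisj, hbip⟩
  have hS : c.IsVertexCover S := ⟨hSsub, hScov⟩
  have hSn : S.ncard < n := by
    by_contra! hnS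
    refine hnoblue (connMatching_of_forall_le_ncard_isVertexCover
      ⟨hG.disjoint, fun v w h ↦ hG.mem_of_adj ((hcolor ▸ le_sup_right : B ≤ G) h)⟩ c
      fun S' hS' ↦ hnS.trans (hSmin S' hS'.1 hS'.2))
  have hV : (V1 : Set V) ∪ V2 = Set.univ := by
    rw [← Finset.coe_union, hcover, Finset.coe_univ]
  have hV1' : (V1 : Set V).ncard = m + n - 1 := by rw [ncard_coe_finset, hV1]
  have hV2' : (V2 : Set V).ncard = m + n - 1 := by rw [ncard_coe_finset, hV2]
  -- vertices of `c` outside `S` on a common side have a common neighbour outside `S`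
  have hside {W W' : Set V} (hGW : G.IsBipartiteWith W W') (hW' : W'.ncard = m + n - 1) :
      ∀ u ∈ W ∩ (c.supp \ S), ∀ v ∈ W ∩ (c.supp \ S), R.Reachable u v := fun u hu v hv ↦
    hS.reachable_of_ncard_add_lt hcolor.ge hu.2 hv.2 (isBipartiteWith_neighborSet_subset hGW hu.1)
      (isBipartiteWith_neighborSet_subset hGW hv.1) (by have := hδ u; have := hδ v; omega)
  obtain ⟨x₀, ⟨hx₀, hx₀c⟩, hx₀S⟩ := exists_mem_notMem_of_ncard_lt_ncard (hSn.trans_le hc1)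
  obtain ⟨y₀, ⟨hy₀, hy₀c⟩, hy₀S⟩ := exists_mem_notMem_of_ncard_lt_ncard (hSn.trans_le hc2)
  have hX := hside hG hV2' x₀ ⟨hx₀, hx₀c, hx₀S⟩
  have hY := hside hG.symm hV1' y₀ ⟨hy₀, hy₀c, hy₀S⟩
  have hxy := hS.reachable_of_forall_ncard_supp_le hcolor.ge hG hV hV1' hV2' hδ (by omega) hSn
    hc1 hc2 hmax ⟨hx₀, hx₀c, hx₀S⟩ ⟨hy₀, hy₀c, hy₀S⟩ hX hY
  refine ⟨R.connectedComponentMk x₀, fun v hv ↦ ConnectedComponent.eq.2 ?_⟩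
  rcases (hV ▸ Set.mem_univ v : v ∈ (V1 : Set V) ∪ V2) with hv₁ | hv₂
  · exact (hX v ⟨hv₁, hv⟩).symm
  · exact (hxy.trans (hY v ⟨hv₂, hv⟩)).symm

theorem stmt_10 {V : Type*} [Fintype V] [DecidableEq V] (m n : ℕ) (hn : 1 ≤ n) (hmn : n < m)
    (G : SimpleGraph V) (V1 V2 : Finset V)
    (hdisj : Disjoint V1 V2) (hcover : V1 ∪ V2 = Finset.univ)
    (hV1 : V1.card = m + n - 1) (hV2 : V2.card = m + n - 1)
    (hbip : ∀ x y, G.Adj x y → (x ∈ V1 ∧ y ∈ V2) ∨ (x ∈ V2 ∧ y ∈ V1))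
    (hδ : ∀ v, 3 * (m + n - 1) < 4 * (G.neighborSet v).ncard)
    (R B : SimpleGraph V) (hcolor : R ⊔ B = G) (hcdisj : Disjoint R B)
    (hnoblue : ¬ ConnMatching B n)
    (c : B.ConnectedComponent)
    (hc1 : n ≤ ((V1 : Set V) ∩ c.supp).ncard) (hc2 : n ≤ ((V2 : Set V) ∩ c.supp).ncard)
    (hmax : ∀ c' : B.ConnectedComponent,
      n ≤ ((V1 : Set V) ∩ c'.supp).ncard → n ≤ ((V2 : Set V) ∩ c'.supp).ncard →
      c'.supp.ncard ≤ c.supp.ncard)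
    (S : Set V) (hSsub : S ⊆ c.supp)
    (hScov : ∀ x y, B.Adj x y → x ∈ c.supp → x ∈ S ∨ y ∈ S)
    (hSmin : ∀ S' : Set V, S' ⊆ c.supp →
      (∀ x y, B.Adj x y → x ∈ c.supp → x ∈ S' ∨ y ∈ S') → S.ncard ≤ S'.ncard) :
    ∃ d : R.ConnectedComponent, ∀ v ∈ c.supp \ S, v ∈ d.supp :=
  stmt_10_general m n hmn G V1 V2 hdisj hcover hV1 hV2 hbip hδ R B hcolor hnoblue c hc1 hc2 hmax S
    hSsub hScov hSmin
end

section
/- Let G be a balanced bipartite graph with parts V1, V2 of size m+n-1 each (m > n ≥ 1) and δ(G) > (3/4)(m+n-1). Fix a red-blue edge-coloring, let R be a largest red component with |V(R) ∩ V_i| ≥ m for both i, let T be a minimum vertex cover of R, and set R'_i = (V(R) ∩ V_i) \ T, V'_i = V_i \ V(R). If |T ∩ V_1| ≤ (m-1)/2, then all vertices of R'_2 lie in a single connected component H of the blue subgraph, and moreover |V(H) ∩ V_1| ≥ n+1. -/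
/-!
If `R'_2` were empty, `V₂ ∩ V(R)` would be an independent subset of the minimum cover `T`, and
Hall's theorem would match it into `V(R) \ T`, producing a connected red matching with `m`
edges. Edges of `G` between vertices of `V(R) \ T` are blue, as `T` covers every red edge of
`R`. Two vertices of `R'_2 ⊆ V₂` have more than `(m + n - 1) / 2 ≥ |T ∩ V₁|` common
neighbours, hence a common neighbour outside `T`, joined to both in blue. Finally any vertex of
`R'_2` has at least `δ(G) - |T ∩ V₁| ≥ n + 1` blue neighbours in `V₁`.
-/

open SimpleGraph Set

namespace SimpleGraph

variable {V : Type*} {R : SimpleGraph V}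

def IsVertexCoverOn (R : SimpleGraph V) (C T : Set V) : Prop :=
  T ⊆ C ∧ ∀ x y, R.Adj x y → x ∈ C → x ∈ T ∨ y ∈ T

def IsMinVertexCoverOn (R : SimpleGraph V) (C T : Set V) : Prop :=
  R.IsVertexCoverOn C T ∧ ∀ T', R.IsVertexCoverOn C T' → T.ncard ≤ T'.ncard

/-- Kőnig's exchange argument: replacing an independent `s ⊆ T` by its neighbours outside `T`
yields another cover, so minimality of `T` gives Hall's condition for `s`. -/
theorem IsMinVertexCoverOn.ncard_le_ncard_neighbors_sdiff [Finite V] {c : R.ConnectedComponent}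
    {T s : Set V} (hT : R.IsMinVertexCoverOn c.supp T) (hsT : s ⊆ T) (hs : R.IsIndepSet s) :
    s.ncard ≤ ({y | ∃ x ∈ s, R.Adj x y} \ T).ncard := by
  obtain ⟨⟨hTc, hcov⟩, hmin⟩ := hT
  set N := {y | ∃ x ∈ s, R.Adj x y} \ T
  have hcov' : R.IsVertexCoverOn c.supp ((T \ s) ∪ N) := by
    refine ⟨union_subset (sdiff_subset.trans hTc) ?_, fun x y hxy hx => ?_⟩
    · rintro y ⟨⟨x, hx, hxy⟩, -⟩
      exact c.mem_supp_of_adj_mem_supp (hTc (hsT hx)) hxy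
    have key : ∀ {x y}, R.Adj x y → x ∈ T → x ∈ T \ s ∨ y ∈ T \ s ∪ N := fun {x y} hxy hxT => by
      by_cases hxs : x ∈ s
      · by_cases hyT : y ∈ T
        · exact .inr (.inl ⟨hyT, fun hys => hs hxs hys hxy.ne hxy⟩)
        · exact .inr (.inr ⟨⟨x, hxs, hxy⟩, hyT⟩)
      · exact .inl ⟨hxT, hxs⟩
    rcases hcov x y hxy hx with hxT | hyT
    · exact (key hxy hxT).imp .inl id
    · exact (key hxy.symm hyT).symm.imp id .inl
  have hTN := calc
    T.ncard ≤ (T \ s ∪ N).ncard := hmin _ hcov'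
    _ ≤ (T \ s).ncard + N.ncard := ncard_union_le _ _
    _ = T.ncard - s.ncard + N.ncard := by rw [ncard_sdiff hsT]
  have := ncard_le_ncard hsT
  omega

theorem IsMinVertexCoverOn.exists_injective_adj_notMem [Fintype V]
    {c : R.ConnectedComponent} {T S : Set V} (hT : R.IsMinVertexCoverOn c.supp T) (hST : S ⊆ T)
    (hS : R.IsIndepSet S) :
    ∃ f : S → V, Function.Injective f ∧ ∀ x : S, R.Adj x (f x) ∧ f x ∉ T := by
  classical
  refine (Fintype.all_card_le_filter_rel_iff_exists_injective
    fun (x : S) y => R.Adj x y ∧ y ∉ T).mp fun A => ?_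
  have hA : ((↑) '' (A : Set S) : Set V) ⊆ T := by
    rintro _ ⟨x, -, rfl⟩
    exact hST x.2
  have hall := hT.ncard_le_ncard_neighbors_sdiff hA (hS.mono (by rintro _ ⟨x, -, rfl⟩; exact x.2))
  rw [ncard_image_of_injective _ Subtype.val_injective, ncard_coe_finset] at hall
  convert hall using 1
  rw [← ncard_coe_finset]
  congr 1
  ext y
  simp only [Finset.coe_filter, Finset.mem_univ, true_and, mem_ofPred_eq, mem_sdiff, mem_image,
    Finset.mem_coe]
  grind

theorem connMatching_of_injective [Fintype V] {ι : Type*} [Fintype ι] {g f : ι → V}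
    (hg : g.Injective) (hf : f.Injective) (hgf : ∀ i j, g i ≠ f j) (hadj : ∀ i, R.Adj (g i) (f i))
    (c : R.ConnectedComponent) (hc : ∀ i, g i ∈ c.supp) : ConnMatching R (Fintype.card ι) := by
  refine ⟨⨆ i, R.subgraphOfAdj (hadj i), ?_, ?_, c, ?_⟩
  · refine Subgraph.IsMatching.iSup (fun i => .subgraphOfAdj _) fun i j hij => ?_
    simp only [support_subgraphOfAdj, disjoint_insert_left, disjoint_insert_right,
      disjoint_singleton, mem_insert_iff, mem_singleton_iff, not_or]
    exact ⟨⟨hg.ne hij.symm, hgf j i⟩, hgf i j, hf.ne hij⟩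
  · have hinj : Function.Injective fun i => s(g i, f i) := fun i j hij => by
      rcases Sym2.eq_iff.mp hij with ⟨h, -⟩ | ⟨h, -⟩
      · exact hg h
      · exact absurd h (hgf i j)
    rw [Subgraph.edgeSet_iSup]
    simp only [edgeSet_subgraphOfAdj, iUnion_singleton_eq_range]
    rw [ncard_range_of_injective hinj, Nat.card_eq_fintype_card]
  · simp only [Subgraph.verts_iSup, subgraphOfAdj_verts, mem_iUnion, mem_insert_iff,
      mem_singleton_iff, ← ConnectedComponent.mem_supp_iff]
    rintro v ⟨i, rfl | rfl⟩
    · exact hc i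
    · exact c.mem_supp_of_adj_mem_supp (hc i) (hadj i)

theorem IsMinVertexCoverOn.nonempty_sdiff_of_not_connMatching [Fintype V] {m : ℕ}
    (hR : ¬ ConnMatching R m) {c : R.ConnectedComponent} {T S : Set V}
    (hT : R.IsMinVertexCoverOn c.supp T) (hSc : S ⊆ c.supp) (hS : R.IsIndepSet S)
    (hm : m ≤ S.ncard) : (S \ T).Nonempty := by
  classical
  by_contra hST
  rw [not_nonempty_iff_eq_empty, sdiff_eq_empty] at hST
  obtain ⟨f, hf, hfT⟩ := hT.exists_injective_adj_notMem hST hS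
  obtain ⟨e⟩ : Nonempty (Fin m ↪ S) := Function.Embedding.nonempty_of_card_le <| by
    rwa [Fintype.card_fin, ← Nat.card_eq_fintype_card, Nat.card_coe_set_eq]
  refine hR ?_
  simpa using connMatching_of_injective (Subtype.val_injective.comp e.injective)
    (hf.comp e.injective)
    (fun i j (h : ((e i : S) : V) = f (e j)) => (hfT (e j)).2 (hST (h ▸ (e i).2)))
    (fun i => (hfT (e i)).1) c (fun i => hSc (e i).2)

theorem IsVertexCoverOn.adj_of_sup_adj {B : SimpleGraph V} {C T : Set V}
    (hT : R.IsVertexCoverOn C T) {u w : V} (hu : u ∈ C) (huT : u ∉ T) (hwT : w ∉ T)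
    (h : (R ⊔ B).Adj u w) : B.Adj u w :=
  h.resolve_left fun hR => (hT.2 u w hR hu).elim huT hwT

end SimpleGraph

theorem Set.exists_mem_inter_notMem_of_three_mul_lt {α : Type*} [Finite α] {U A B T : Set α}
    (hA : A ⊆ U) (hB : B ⊆ U) (hAU : 3 * U.ncard < 4 * A.ncard) (hBU : 3 * U.ncard < 4 * B.ncard)
    (hT : 2 * (T ∩ U).ncard ≤ U.ncard) : ∃ w ∈ A ∩ B, w ∉ T := by
  by_contra! h
  have hAB : A ∩ B ⊆ T ∩ U := fun w hw => ⟨h w hw, hA hw.1⟩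
  have := ncard_le_ncard hAB
  have := ncard_le_ncard (union_subset hA hB)
  have := ncard_inter_add_ncard_union A B
  omega

theorem stmt_14_general {V : Type*} [Fintype V] (m n : ℕ) (hmn : n < m)
    (G : SimpleGraph V) (V1 V2 : Finset V)
    (hdisj : Disjoint V1 V2)
    (hV1 : V1.card = m + n - 1)
    (hbip : ∀ x y, G.Adj x y → (x ∈ V1 ∧ y ∈ V2) ∨ (x ∈ V2 ∧ y ∈ V1))
    (hδ : ∀ v, 3 * (m + n - 1) < 4 * (G.neighborSet v).ncard)
    (R B : SimpleGraph V) (hcolor : R ⊔ B = G)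
    (hnored : ¬ ConnMatching R m)
    (c : R.ConnectedComponent)
    (hc2 : m ≤ ((V2 : Set V) ∩ c.supp).ncard)
    (T : Set V) (hTsub : T ⊆ c.supp)
    (hTcov : ∀ x y, R.Adj x y → x ∈ c.supp → x ∈ T ∨ y ∈ T)
    (hTmin : ∀ T' : Set V, T' ⊆ c.supp →
      (∀ x y, R.Adj x y → x ∈ c.supp → x ∈ T' ∨ y ∈ T') → T.ncard ≤ T'.ncard)
    (hT1 : 2 * (T ∩ ↑V1).ncard ≤ m - 1) :
    ∃ d : B.ConnectedComponent,
      (∀ v ∈ (↑V2 ∩ c.supp) \ T, v ∈ d.supp) ∧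
      n + 1 ≤ ((V1 : Set V) ∩ d.supp).ncard := by
  subst hcolor
  have hT : R.IsMinVertexCoverOn c.supp T := ⟨⟨hTsub, hTcov⟩, fun T' h => hTmin T' h.1 h.2⟩
  have hU : (V1 : Set V).ncard = m + n - 1 := by rw [ncard_coe_finset, hV1]
  have hN : ∀ v ∈ V2, (R ⊔ B).neighborSet v ⊆ V1 := fun v hv w hvw =>
    ((hbip v w hvw).resolve_left fun h => Finset.disjoint_left.mp hdisj h.1 hv).2
  have hindep : R.IsIndepSet (↑V2 ∩ c.supp) := fun x hx y hy _ hxy =>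
    Finset.disjoint_left.mp hdisj (hN x hx.1 (.inl hxy)) hy.1
  have hblue : ∀ v ∈ (↑V2 ∩ c.supp) \ T, ∀ w ∈ (R ⊔ B).neighborSet v, w ∉ T → B.Adj v w :=
    fun v hv w hw hwT => hT.1.adj_of_sup_adj hv.1.2 hv.2 hwT hw
  obtain ⟨v₀, hv₀⟩ := hT.nonempty_sdiff_of_not_connMatching hnored inter_subset_right hindep hc2
  refine ⟨B.connectedComponentMk v₀, fun v hv => ?_, ?_⟩
  · obtain ⟨w, ⟨hvw, hv₀w⟩, hwT⟩ := exists_mem_inter_notMem_of_three_mul_lt (hN v hv.1.1)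
      (hN v₀ hv₀.1.1) (hU ▸ hδ v) (hU ▸ hδ v₀) (hT1.trans (by omega))
    exact ConnectedComponent.sound
      ((hblue v hv w hvw hwT).reachable.trans (hblue v₀ hv₀ w hv₀w hwT).reachable.symm)
  · have hsub : (R ⊔ B).neighborSet v₀ \ (T ∩ V1) ⊆ V1 ∩ (B.connectedComponentMk v₀).supp :=
      fun w ⟨hw, hwT⟩ => have hw1 := hN v₀ hv₀.1.1 hw
        ⟨hw1, ConnectedComponent.sound (hblue v₀ hv₀ w hw fun h => hwT ⟨h, hw1⟩).reachable.symm⟩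
    calc n + 1 ≤ ((R ⊔ B).neighborSet v₀).ncard - (T ∩ V1).ncard := by have := hδ v₀; omega
      _ ≤ ((R ⊔ B).neighborSet v₀ \ (T ∩ V1)).ncard := le_ncard_sdiff _ _
      _ ≤ _ := ncard_le_ncard hsub

theorem stmt_14 {V : Type*} [Fintype V] [DecidableEq V] (m n : ℕ) (hn : 1 ≤ n) (hmn : n < m)
    (G : SimpleGraph V) (V1 V2 : Finset V)
    (hdisj : Disjoint V1 V2) (hcover : V1 ∪ V2 = Finset.univ)
    (hV1 : V1.card = m + n - 1) (hV2 : V2.card = m + n - 1)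
    (hbip : ∀ x y, G.Adj x y → (x ∈ V1 ∧ y ∈ V2) ∨ (x ∈ V2 ∧ y ∈ V1))
    (hδ : ∀ v, 3 * (m + n - 1) < 4 * (G.neighborSet v).ncard)
    (R B : SimpleGraph V) (hcolor : R ⊔ B = G) (hcdisj : Disjoint R B)
    (hnored : ¬ ConnMatching R m)
    (c : R.ConnectedComponent)
    (hmax : ∀ c' : R.ConnectedComponent, c'.supp.ncard ≤ c.supp.ncard)
    (hc1 : m ≤ ((V1 : Set V) ∩ c.supp).ncard) (hc2 : m ≤ ((V2 : Set V) ∩ c.supp).ncard)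
    (T : Set V) (hTsub : T ⊆ c.supp)
    (hTcov : ∀ x y, R.Adj x y → x ∈ c.supp → x ∈ T ∨ y ∈ T)
    (hTmin : ∀ T' : Set V, T' ⊆ c.supp →
      (∀ x y, R.Adj x y → x ∈ c.supp → x ∈ T' ∨ y ∈ T') → T.ncard ≤ T'.ncard)
    (hT1 : 2 * (T ∩ ↑V1).ncard ≤ m - 1) :
    ∃ d : B.ConnectedComponent,
      (∀ v ∈ (↑V2 ∩ c.supp) \ T, v ∈ d.supp) ∧
      n + 1 ≤ ((V1 : Set V) ∩ d.supp).ncard :=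
  stmt_14_general m n hmn G V1 V2 hdisj hV1 hbip hδ R B hcolor hnored c hc2 T hTsub hTcov hTmin hT1
end
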